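/- arXiv:1711.07573 — 12 statements merged into one kernel-verified Lean document; each statement's English description precedes it below -/
import Mathlib

section
/- Let F be a real quadratic field with real embeddings σ, σ' and discriminant Δ_F, and let I be a reduced fractional ideal of F written as I = ℤ·1 + ℤ·f where f ∈ F satisfies σ(f) > 1 and −1 < σ'(f) < 0. If N(f − 1/2) ≤ −3/4 (i.e. σ(f − 1/2)·σ'(f − 1/2) ≤ −3/4), then I is 1-reduced. -/
open NumberField
open scoped nonZeroDivisors

/-- The `u`-length of an element `g` of a real quadratic field with real embeddings `σ, σ'`:
`‖g‖_u = √(u₁²·σ(g)² + u₂²·σ'(g)²)`. -/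
noncomputable def normU {F : Type*} [Field F] (σ σ' : F →+* ℝ) (u₁ u₂ : ℝ) (g : F) : ℝ :=
  Real.sqrt (u₁ ^ 2 * (σ g) ^ 2 + u₂ ^ 2 * (σ' g) ^ 2)

/-- A fractional ideal `I` is reduced if `1 ∈ I` and the only `g ∈ I` with `|σ g| < 1` and
`|σ' g| < 1` is `g = 0`. -/
def IsReducedIdeal {F : Type*} [Field F] [NumberField F] (σ σ' : F →+* ℝ)
    (I : FractionalIdeal (𝓞 F)⁰ F) : Prop :=
  (1 : F) ∈ I ∧ ∀ g ∈ I, |σ g| < 1 → |σ' g| < 1 → g = 0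

/-- `1` is primitive in `I`: `1 ∈ I` and no `1/d ∈ I` for an integer `d ≥ 2`. -/
def IsOnePrimitive {F : Type*} [Field F] [NumberField F]
    (I : FractionalIdeal (𝓞 F)⁰ F) : Prop :=
  (1 : F) ∈ I ∧ ∀ d : ℕ, 2 ≤ d → ((d : F))⁻¹ ∉ I

/-- `I` is 1-reduced: `1` is primitive in `I` and for some metric `u = (u₁, u₂)` of positive
reals, `1` is a shortest nonzero vector of `I` with respect to `‖·‖_u`. -/
def IsOneReduced {F : Type*} [Field F] [NumberField F] (σ σ' : F →+* ℝ)
    (I : FractionalIdeal (𝓞 F)⁰ F) : Prop :=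
  IsOnePrimitive I ∧ ∃ u₁ u₂ : ℝ, 0 < u₁ ∧ 0 < u₂ ∧
    ∀ g ∈ I, g ≠ 0 → normU σ σ' u₁ u₂ 1 ≤ normU σ σ' u₁ u₂ g

/-!
With the weights `u₁² = 1 - 2σ'(f)` and `u₂² = 2σ(f) - 1` one has `‖1‖_u² = 2(σ f - σ' f)` and,
for `g = m + n f`,
`‖g‖_u² = (σ f - σ' f)(2m² + 2mn + K n²)` with `K = σ f + σ' f - 2σ(f)σ'(f) = 1/2 - 2N(f - 1/2)`.
The norm condition is exactly `K ≥ 2`, and `2m² + 2mn + 2n² = m² + n² + (m + n)² ≥ 2` for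
`(m, n) ≠ (0, 0)`. Primitivity of `1` holds because `σ f ≠ σ' f` forces `(ℤ + ℤf) ∩ ℚ = ℤ`.
-/

lemma Int.two_le_sq_add_sq_add_add_sq {m n : ℤ} (h : m ≠ 0 ∨ n ≠ 0) :
    2 ≤ m ^ 2 + n ^ 2 + (m + n) ^ 2 := by
  rcases h with h | h <;> nlinarith [Int.one_le_abs h, sq_abs m, sq_abs n, sq_nonneg (m + n)]

lemma two_le_two_mul_sq_add_mul_add_mul_sq {K : ℝ} (hK : 2 ≤ K) {m n : ℤ} (h : m ≠ 0 ∨ n ≠ 0) :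
    2 ≤ 2 * (m : ℝ) ^ 2 + 2 * m * n + K * (n : ℝ) ^ 2 := by
  have h₂ : (2 : ℝ) ≤ (m : ℝ) ^ 2 + (n : ℝ) ^ 2 + ((m : ℝ) + n) ^ 2 := by
    exact_mod_cast Int.two_le_sq_add_sq_add_add_sq h
  nlinarith [sq_nonneg (n : ℝ)]

lemma two_mul_sub_le_weighted_sq_add_sq {a b : ℝ} (hab : b < a) (hK : 2 ≤ a + b - 2 * a * b)
    {m n : ℤ} (h : m ≠ 0 ∨ n ≠ 0) :
    2 * (a - b) ≤ (1 - 2 * b) * (m + n * a) ^ 2 + (2 * a - 1) * (m + n * b) ^ 2 := by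
  have hform : (1 - 2 * b) * (m + n * a) ^ 2 + (2 * a - 1) * (m + n * b) ^ 2 =
      (a - b) * (2 * (m : ℝ) ^ 2 + 2 * m * n + (a + b - 2 * a * b) * (n : ℝ) ^ 2) := by
    ring
  rw [hform]
  linarith [mul_le_mul_of_nonneg_left (two_le_two_mul_sq_add_mul_add_mul_sq hK h)
    (sub_nonneg.2 hab.le)]

section QuadraticLattice

variable {F : Type*} [Field F] {σ σ' : F →+* ℝ} {I : FractionalIdeal (𝓞 F)⁰ F} {f : F}

lemma one_mem_of_mem_iff (hI : ∀ x : F, x ∈ I ↔ ∃ m n : ℤ, x = (m : F) + (n : F) * f) :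
    (1 : F) ∈ I :=
  (hI 1).2 ⟨1, 0, by push_cast; ring⟩

lemma isOnePrimitive_of_mem_iff [NumberField F]
    (hI : ∀ x : F, x ∈ I ↔ ∃ m n : ℤ, x = (m : F) + (n : F) * f) (hf : σ f ≠ σ' f) :
    IsOnePrimitive I := by
  refine ⟨one_mem_of_mem_iff hI, fun d hd hmem => ?_⟩
  obtain ⟨m, n, hx⟩ := (hI _).1 hmem
  have hσx : ((d : ℝ))⁻¹ = m + n * σ f := by simpa using congrArg σ hx
  have hσ'x : ((d : ℝ))⁻¹ = m + n * σ' f := by simpa using congrArg σ' hx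
  have hn : (n : ℝ) = 0 := by
    have : (n : ℝ) * (σ f - σ' f) = 0 := by linarith
    exact (mul_eq_zero.1 this).resolve_right (sub_ne_zero.2 hf)
  have hm : ((d : ℝ))⁻¹ = m := by rw [hσx, hn]; ring
  have hd2 : (2 : ℝ) ≤ d := by exact_mod_cast hd
  have hm_pos : (0 : ℝ) < m := hm ▸ by positivity
  have hm_lt : (m : ℝ) < 1 := hm ▸ inv_lt_one_of_one_lt₀ (by linarith)
  have : 0 < m := by exact_mod_cast hm_pos
  have : m < 1 := by exact_mod_cast hm_lt
  omega

lemma normU_one_le_iff {u₁ u₂ : ℝ} {g : F} :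
    normU σ σ' u₁ u₂ 1 ≤ normU σ σ' u₁ u₂ g ↔
      u₁ ^ 2 + u₂ ^ 2 ≤ u₁ ^ 2 * (σ g) ^ 2 + u₂ ^ 2 * (σ' g) ^ 2 := by
  unfold normU
  rw [Real.sqrt_le_sqrt_iff (by positivity), map_one, map_one, one_pow, mul_one, mul_one]

end QuadraticLattice

theorem reduced_is_oneReduced_of_norm_le_general {F : Type*} [Field F] [NumberField F]
    (σ σ' : F →+* ℝ)
    (I : FractionalIdeal (𝓞 F)⁰ F) (f : F)
    (hI : ∀ x : F, x ∈ I ↔ ∃ m n : ℤ, x = (m : F) + (n : F) * f)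
    (hf1 : 1 < σ f) (hf3 : σ' f < 0)
    (hN : σ (f - 1/2) * σ' (f - 1/2) ≤ -3/4) :
    IsOneReduced σ σ' I := by
  simp only [map_sub, map_div₀, map_one, map_ofNat] at hN
  have hK : 2 ≤ σ f + σ' f - 2 * σ f * σ' f := by nlinarith
  refine ⟨isOnePrimitive_of_mem_iff hI (by linarith : σ' f < σ f).ne',
    √(1 - 2 * σ' f), √(2 * σ f - 1), Real.sqrt_pos.2 (by linarith),
    Real.sqrt_pos.2 (by linarith), fun g hg hg0 => ?_⟩
  obtain ⟨m, n, rfl⟩ := (hI g).1 hg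
  have hmn : m ≠ 0 ∨ n ≠ 0 := by
    by_contra! h
    exact hg0 (by simp [h.1, h.2])
  rw [normU_one_le_iff, Real.sq_sqrt (by linarith), Real.sq_sqrt (by linarith)]
  simp only [map_add, map_mul, map_intCast]
  linarith [two_mul_sub_le_weighted_sq_add_sq (by linarith) hK hmn]

/-- Theorem 1.1: a reduced ideal `I = ℤ + ℤf` of a real quadratic field with `σ f > 1` and
`-1 < σ' f < 0` is 1-reduced provided `N(f - 1/2) ≤ -3/4`. -/
theorem reduced_is_oneReduced_of_norm_le {F : Type*} [Field F] [NumberField F]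
    (hdeg : Module.finrank ℚ F = 2)
    (σ σ' : F →+* ℝ) (hσ : σ ≠ σ')
    (I : FractionalIdeal (𝓞 F)⁰ F) (f : F)
    (hI : ∀ x : F, x ∈ I ↔ ∃ m n : ℤ, x = (m : F) + (n : F) * f)
    (hred : IsReducedIdeal σ σ' I)
    (hf1 : 1 < σ f) (hf2 : -1 < σ' f) (hf3 : σ' f < 0)
    (hN : σ (f - 1/2) * σ' (f - 1/2) ≤ -3/4) :
    IsOneReduced σ σ' I :=
  reduced_is_oneReduced_of_norm_le_general σ σ' I f hI hf1 hf3 hN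
end

section
/- Let F be a real quadratic field with real embeddings σ, σ', and let I be a reduced fractional ideal of F written as I = ℤ·1 + ℤ·f where f ∈ F satisfies σ(f) > 1 and −1 < σ'(f) < 0. Then I is not 1-reduced if and only if N(f − 1/2) > −3/4 (i.e. σ(f − 1/2)·σ'(f − 1/2) > −3/4). -/
open NumberField
open scoped nonZeroDivisors

section Aux

private lemma ineq_case2 (T x y k s : ℝ) (hT0 : 0 < T) (hT3 : 1/3 ≤ T)
    (hs : 3/2 ≤ s) (hk : 2*s ≤ k) (hP5 : T ≤ (2*s-1)^2 - 1)
    (hxy : x - y = k) : 1 + T ≤ x^2 + T*y^2 := by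
  have h3 : (3:ℝ) ≤ k := by linarith
  rcases le_or_gt 1 y with hy | hy
  · have hx2 : (1:ℝ) ≤ x^2 := by nlinarith
    have hy2 : (1:ℝ) ≤ y^2 := by nlinarith
    have := mul_nonneg hT0.le (by linarith : (0:ℝ) ≤ y^2 - 1)
    nlinarith
  · rcases le_or_gt y (-1) with hy2 | hy2
    · rcases le_or_gt 1 x with hx | hx
      · have hy3 : (1:ℝ) ≤ y^2 := by nlinarith
        have := mul_nonneg hT0.le (by linarith : (0:ℝ) ≤ y^2 - 1)
        nlinarith
      · have hylt : y < -2 := by linarith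
        have hy4 : (3:ℝ) ≤ y^2 - 1 := by nlinarith
        have h1 : (1/3:ℝ)*3 ≤ T*(y^2-1) := mul_le_mul hT3 hy4 (by norm_num) hT0.le
        nlinarith [sq_nonneg x]
    · have hx2 : 2*s - 1 ≤ x := by linarith
      have hx3 : (2*s-1)^2 ≤ x^2 := by nlinarith
      have h4 := mul_nonneg hT0.le (sq_nonneg y)
      nlinarith

set_option maxHeartbeats 1000000 in
private lemma ineq_key_aux (a c T : ℝ) (ha : 1 < a) (hc0 : 0 < c) (hc1 : c < 1)
    (hsum : 3/2 ≤ a + c) (hT0 : 0 < T) (hT3 : 1/3 ≤ T)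
    (P1 : T * (1 - c^2) ≤ a^2 - 1)
    (P2 : T * (c*(2-c)) ≤ a*(a+2))
    (P3 : a*(2-a) ≤ T * (c*(2+c)))
    (P5 : T ≤ (2*(a+c)-1)^2 - 1)
    (m n : ℤ) (hn : 0 ≤ n) (hmn : ¬(m = 0 ∧ n = 0)) :
    1 + T ≤ ((m:ℝ) + n*a)^2 + T * ((m:ℝ) - n*c)^2 := by
  obtain rfl | hn1 := hn.eq_or_lt
  · have hm : m ≠ 0 := by rintro rfl; exact hmn ⟨rfl, rfl⟩
    have h1 : (1:ℤ) ≤ m^2 := by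
      rcases hm.lt_or_gt with h | h <;> nlinarith
    have h1' : (1:ℝ) ≤ (m:ℝ)^2 := by exact_mod_cast h1
    push_cast
    nlinarith
  · obtain rfl | hn2 := eq_or_lt_of_le (show (1:ℤ) ≤ n from hn1)
    · push_cast
      rcases le_or_gt 2 m with hm | hm
      · have hm' : (2:ℝ) ≤ (m:ℝ) := by exact_mod_cast hm
        have h1 : (1:ℝ) ≤ (m:ℝ) - c := by linarith
        have h2 : (1:ℝ) ≤ (m:ℝ) + a := by linarith
        nlinarith [mul_nonneg hT0.le (show (0:ℝ) ≤ ((m:ℝ)-c)^2 - 1 by nlinarith)]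
      · rcases le_or_gt m (-2) with hm' | hm'
        · have hm'' : ((m:ℝ)) ≤ -2 := by exact_mod_cast hm'
          have hy : (m:ℝ) - c ≤ -2 := by linarith
          have hy2 : (4:ℝ) ≤ ((m:ℝ)-c)^2 := by nlinarith
          nlinarith [sq_nonneg ((m:ℝ)+a), mul_le_mul_of_nonneg_left hy2 hT0.le]
        · have hm3 : m = -1 ∨ m = 0 ∨ m = 1 := by omega
          rcases hm3 with rfl | rfl | rfl
          · push_cast; nlinarith [P3]
          · push_cast; nlinarith [P1]
          · push_cast; nlinarith [P2]
    · have hn2' : (2:ℝ) ≤ (n:ℝ) := by exact_mod_cast hn2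
      have hac : (0:ℝ) ≤ a + c := by linarith
      have h23 : 2*(a+c) ≤ (n:ℝ)*(a+c) := by nlinarith
      exact ineq_case2 T ((m:ℝ)+n*a) ((m:ℝ)-n*c) ((n:ℝ)*(a+c)) (a+c) hT0 hT3 hsum h23
        P5 (by ring)

private lemma ineq_key (a c T : ℝ) (ha : 1 < a) (hc0 : 0 < c) (hc1 : c < 1)
    (hsum : 3/2 ≤ a + c) (hT0 : 0 < T) (hT3 : 1/3 ≤ T)
    (P1 : T * (1 - c^2) ≤ a^2 - 1)
    (P2 : T * (c*(2-c)) ≤ a*(a+2))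
    (P3 : a*(2-a) ≤ T * (c*(2+c)))
    (P5 : T ≤ (2*(a+c)-1)^2 - 1)
    (m n : ℤ) (hmn : ¬(m = 0 ∧ n = 0)) :
    1 + T ≤ ((m:ℝ) + n*a)^2 + T * ((m:ℝ) - n*c)^2 := by
  rcases le_or_gt 0 n with hn | hn
  · exact ineq_key_aux a c T ha hc0 hc1 hsum hT0 hT3 P1 P2 P3 P5 m n hn hmn
  · have h := ineq_key_aux a c T ha hc0 hc1 hsum hT0 hT3 P1 P2 P3 P5 (-m) (-n)
      (by omega) (by omega)
    push_cast at h
    nlinarith [h]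

private lemma sumge (a c : ℝ) (hc0 : 0 < c) (hc1 : c < 1)
    (hreg : 2 + c ≤ a * (1 + 2*c)) : 3/2 ≤ a + c := by
  by_contra hcon
  push_neg at hcon
  nlinarith [mul_lt_mul_of_pos_left hcon (show (0:ℝ) < 1+2*c by linarith), sq_nonneg (4*c-1)]

set_option maxHeartbeats 1000000 in
private lemma exists_T (a c : ℝ) (ha : 1 < a) (hc0 : 0 < c) (hc1 : c < 1)
    (hreg : 2 + c ≤ a * (1 + 2*c)) :
    ∃ T : ℝ, 0 < T ∧ 1/3 ≤ T ∧ T * (1 - c^2) ≤ a^2 - 1 ∧ T * (c*(2-c)) ≤ a*(a+2) ∧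
      a*(2-a) ≤ T * (c*(2+c)) ∧ T ≤ (2*(a+c)-1)^2 - 1 := by
  have hsum : 3/2 ≤ a + c := sumge a c hc0 hc1 hreg
  have hd1 : (0:ℝ) < 1 - c^2 := by nlinarith
  have hd2 : (0:ℝ) < c*(2-c) := by nlinarith
  have hd3 : (0:ℝ) < c*(2+c) := by nlinarith
  set U : ℝ := (a^2-1)/(1-c^2) with hU
  set V : ℝ := a*(a+2)/(c*(2-c)) with hV
  set L : ℝ := (2*(a+c)-1)^2 - 1 with hL
  have hU0 : 0 < U := div_pos (by nlinarith) hd1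
  have hV0 : 0 < V := div_pos (by nlinarith) hd2
  have hL0 : (3:ℝ) ≤ L := by rw [hL]; nlinarith
  refine ⟨min (min U V) L, lt_min (lt_min hU0 hV0) (by linarith), ?_, ?_, ?_, ?_,
    min_le_right _ _⟩
  · refine le_min (le_min ?_ ?_) (by linarith)
    · rw [hU, le_div_iff₀ hd1]
      have h : 1 - c ≤ (a-1)*(1+2*c) := by nlinarith
      nlinarith [h, mul_nonneg (show (0:ℝ) ≤ a-1 by linarith)
        (show (0:ℝ) ≤ 1+2*c by linarith)]
    · rw [hV, le_div_iff₀ hd2]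
      nlinarith
  · have h : min (min U V) L ≤ U := le_trans (min_le_left _ _) (min_le_left _ _)
    rw [hU, le_div_iff₀ hd1] at h
    linarith
  · have h : min (min U V) L ≤ V := le_trans (min_le_left _ _) (min_le_right _ _)
    rw [hV, le_div_iff₀ hd2] at h
    linarith
  · have h : a*(2-a)/(c*(2+c)) ≤ min (min U V) L := by
      refine le_min (le_min ?_ ?_) ?_
      · rw [hU, div_le_div_iff₀ hd3 hd1]
        nlinarith [mul_nonneg (sub_nonneg.2 hreg) (show (0:ℝ) ≤ a + c by linarith)]
      · rw [hV, div_le_div_iff₀ hd3 hd2]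
        nlinarith [mul_pos (mul_pos (show (0:ℝ) < a by linarith) hc0)
          (show (0:ℝ) < a + c by linarith)]
      · rw [hL, div_le_iff₀ hd3]
        nlinarith [mul_nonneg (sub_nonneg.2 hreg) (show (0:ℝ) ≤ a + c by linarith),
          sq_nonneg (a-2), sq_nonneg (a+c-2), mul_pos hc0 (show (0:ℝ) < 2+c by linarith),
          mul_nonneg (mul_nonneg hc0.le (show (0:ℝ) ≤ 2+c by linarith)) (sub_nonneg.2 hreg)]
    rw [div_le_iff₀ hd3] at h
    linarith

end Aux

set_option maxHeartbeats 1000000 in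
/-- Corollary 4.6: a reduced ideal `I = ℤ + ℤf` of a real quadratic field with `σ f > 1` and
`-1 < σ' f < 0` is not 1-reduced if and only if `N(f - 1/2) > -3/4`. -/
theorem not_oneReduced_iff_norm_gt {F : Type*} [Field F] [NumberField F]
    (hdeg : Module.finrank ℚ F = 2)
    (σ σ' : F →+* ℝ) (hσ : σ ≠ σ')
    (I : FractionalIdeal (𝓞 F)⁰ F) (f : F)
    (hI : ∀ x : F, x ∈ I ↔ ∃ m n : ℤ, x = (m : F) + (n : F) * f)
    (hred : IsReducedIdeal σ σ' I)
    (hf1 : 1 < σ f) (hf2 : -1 < σ' f) (hf3 : σ' f < 0) :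
    ¬ IsOneReduced σ σ' I ↔ -3/4 < σ (f - 1/2) * σ' (f - 1/2) := by
  have h1I : (1:F) ∈ I := (hI 1).2 ⟨1, 0, by push_cast; ring⟩
  have hfI : f ∈ I := (hI f).2 ⟨0, 1, by push_cast; ring⟩
  have hfm1I : f - 1 ∈ I := (hI (f-1)).2 ⟨-1, 1, by push_cast; ring⟩
  have hNf : σ (f - 1/2) * σ' (f - 1/2) = (σ f - 1/2)*(σ' f - 1/2) := by
    rw [map_sub, map_sub, map_div₀, map_div₀, map_one, map_one, map_ofNat, map_ofNat]
  -- 1 is primitive in I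
  have hprim : IsOnePrimitive I := by
    refine ⟨h1I, ?_⟩
    intro d hd hmem
    obtain ⟨m, n, h⟩ := (hI _).1 hmem
    have h1 : ((d:ℝ))⁻¹ = (m:ℝ) + (n:ℝ) * σ f := by
      have := congrArg σ h
      rwa [map_inv₀, map_natCast, map_add, map_mul, map_intCast, map_intCast] at this
    have h2 : ((d:ℝ))⁻¹ = (m:ℝ) + (n:ℝ) * σ' f := by
      have := congrArg σ' h
      rwa [map_inv₀, map_natCast, map_add, map_mul, map_intCast, map_intCast] at this
    have h12 : (m:ℝ) + (n:ℝ) * σ f = (m:ℝ) + (n:ℝ) * σ' f := h1.symm.trans h2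
    have h3 : (n:ℝ) * (σ f - σ' f) = 0 := by linear_combination h12
    have hn0 : n = 0 := by
      rcases mul_eq_zero.1 h3 with h4 | h4
      · exact_mod_cast h4
      · exfalso; have : σ' f < σ f := by linarith
        linarith [sub_pos.2 this]
    subst hn0
    have hd2 : (2:ℝ) ≤ (d:ℝ) := by exact_mod_cast hd
    have hdpos : (0:ℝ) < (d:ℝ) := by linarith
    have hinv : 0 < ((d:ℝ))⁻¹ := inv_pos.2 hdpos
    have hinv2 : ((d:ℝ))⁻¹ ≤ 1/2 := by
      rw [show (1/2 : ℝ) = (2:ℝ)⁻¹ by norm_num]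
      exact inv_anti₀ (by norm_num) hd2
    rw [h1] at hinv hinv2
    push_cast at hinv hinv2
    rcases le_or_gt 1 m with hm | hm
    · have : (1:ℝ) ≤ (m:ℝ) := by exact_mod_cast hm
      linarith
    · have hm' : m ≤ 0 := by omega
      have : (m:ℝ) ≤ 0 := by exact_mod_cast hm'
      linarith
  constructor
  · -- not 1-reduced → norm condition
    intro hnot
    by_contra hN
    push_neg at hN
    rw [hNf] at hN
    apply hnot
    refine ⟨hprim, ?_⟩
    set a := σ f with ha_def
    set b := σ' f with hb_def
    set c := -b with hc_def
    have hc0 : 0 < c := by rw [hc_def]; linarith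
    have hc1 : c < 1 := by rw [hc_def]; linarith
    have hreg : 2 + c ≤ a * (1 + 2*c) := by rw [hc_def]; nlinarith [hN]
    obtain ⟨T, hT0, hT3, P1, P2, P3, P5⟩ := exists_T a c hf1 hc0 hc1 hreg
    have hsum : 3/2 ≤ a + c := sumge a c hc0 hc1 hreg
    refine ⟨1, Real.sqrt T, one_pos, Real.sqrt_pos.2 hT0, ?_⟩
    intro g hg hgne
    obtain ⟨m, n, hgmn⟩ := (hI g).1 hg
    have hσg : σ g = (m:ℝ) + (n:ℝ)*a := by
      rw [hgmn, map_add, map_mul, map_intCast, map_intCast, ha_def]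
    have hσ'g : σ' g = (m:ℝ) - (n:ℝ)*c := by
      rw [hgmn, map_add, map_mul, map_intCast, map_intCast, hc_def, hb_def]; ring
    have hmn : ¬(m = 0 ∧ n = 0) := by
      rintro ⟨rfl, rfl⟩
      apply hgne
      rw [hgmn]; push_cast; ring
    have key := ineq_key a c T hf1 hc0 hc1 hsum hT0 hT3 P1 P2 P3 P5 m n hmn
    unfold normU
    apply Real.sqrt_le_sqrt
    rw [map_one, map_one, hσg, hσ'g, Real.sq_sqrt hT0.le]
    nlinarith [key]
  · -- norm condition → not 1-reduced
    intro hN hone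
    obtain ⟨-, u₁, u₂, hu₁, hu₂, hall⟩ := hone
    rw [hNf] at hN
    set a := σ f with ha_def
    set b := σ' f with hb_def
    have hfne : f ≠ 0 := by
      intro h; rw [ha_def, h, map_zero] at hf1; linarith
    have hfm1ne : f - 1 ≠ 0 := by
      intro h
      have hfeq : f = 1 := sub_eq_zero.1 h
      rw [ha_def, hfeq, map_one] at hf1; linarith
    have k1 := hall f hfI hfne
    have k2 := hall (f-1) hfm1I hfm1ne
    unfold normU at k1 k2
    rw [map_one, map_one] at k1 k2
    rw [map_sub, map_sub, map_one, map_one] at k2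
    have k1' : u₁^2*1^2 + u₂^2*1^2 ≤ u₁^2*a^2 + u₂^2*b^2 :=
      (Real.sqrt_le_sqrt_iff (by positivity)).1 k1
    have k2' : u₁^2*1^2 + u₂^2*1^2 ≤ u₁^2*(a-1)^2 + u₂^2*(b-1)^2 :=
      (Real.sqrt_le_sqrt_iff (by positivity)).1 k2
    have hX : 0 < u₁^2 := by positivity
    have hY : 0 < u₂^2 := by positivity
    have ha2 : a < 2 := by
      by_contra h
      push_neg at h
      nlinarith [mul_nonneg (show (0:ℝ) ≤ a-2 by linarith)
        (show (0:ℝ) ≤ 1/2 - b by linarith)]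
    have r1 : u₂^2*(1-b^2) ≤ u₁^2*(a^2-1) := by nlinarith [k1']
    have r2 : u₁^2*(a*(2-a)) ≤ u₂^2*((b-1)^2-1) := by nlinarith [k2']
    have hE : (a^2-1)*((b-1)^2-1) < (a*(2-a))*(1-b^2) := by
      nlinarith [mul_pos (show (0:ℝ) < (2-b) - a*(1-2*b) by nlinarith [hN])
        (show (0:ℝ) < a - b by linarith)]
    have m1 := mul_le_mul_of_nonneg_right r1 (show (0:ℝ) ≤ a*(2-a) by nlinarith)
    have m2 := mul_le_mul_of_nonneg_right r2 (show (0:ℝ) ≤ a^2-1 by nlinarith)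
    nlinarith [m1, m2, mul_pos hY (sub_pos.2 hE)]
end

section
/- Let F be a real quadratic field with discriminant Δ_F and let I be a nonzero fractional ideal of F. If the absolute norm of I⁻¹ is strictly greater than √(Δ_F/3), then I is not 1-reduced. -/
open NumberField
open scoped nonZeroDivisors

/-!
Write `I = ℤ v₀ + ℤ v₁`. Since `1 = a v₀ + b v₁` is primitive in `I`, `gcd(a, b) = 1`, so a
unimodular change of basis produces `e ∈ I` with `disc(1, e) = disc(v₀, v₁) = N(I)² Δ_F`, that is
`(σ' e - σ e)² = N(I)² Δ_F`, which is `< 3` by hypothesis. Subtracting from `e` the integer `k`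
nearest to the `(u₁², u₂²)`-weighted mean of `σ e` and `σ' e`, Lagrange's identity
`(A + B)(A s² + B s'²) = (A s + B s')² + A B (s' - s)²` shows `‖e - k‖_u < ‖1‖_u`.
-/

open Module Matrix

theorem NumberField.discr_basisOfFractionalIdeal {K : Type*} [Field K] [NumberField K]
    (I : (FractionalIdeal (𝓞 K)⁰ K)ˣ) :
    Algebra.discr ℚ (basisOfFractionalIdeal K I) =
      FractionalIdeal.absNorm (I : FractionalIdeal (𝓞 K)⁰ K) ^ 2 * discr K := by
  classical
  set e := (integralBasis K).indexEquiv (basisOfFractionalIdeal K I)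
  rw [← Algebra.discr_reindex ℚ (basisOfFractionalIdeal K I) e.symm, ← Basis.coe_reindex,
    ← (integralBasis K).toMatrix_map_vecMul ((basisOfFractionalIdeal K I).reindex e.symm),
    Algebra.discr_of_matrix_vecMul, ← Basis.det_apply, ← sq_abs,
    det_basisOfFractionalIdeal_eq_absNorm, coe_discr]

theorem isCoprime_of_smul_add_smul_eq_one {K : Type*} [Field K] [CharZero K] {v : Fin 2 → K}
    {a b : ℤ} (hab : a • v 0 + b • v 1 = 1)
    (hprim : ∀ d : ℕ, 2 ≤ d → (d : K)⁻¹ ∉ Submodule.span ℤ (Set.range v)) : IsCoprime a b := by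
  rw [Int.isCoprime_iff_gcd_eq_one]
  by_contra hg
  set g := Int.gcd a b
  have hg0 : g ≠ 0 := by
    intro h0
    obtain ⟨rfl, rfl⟩ := Int.gcd_eq_zero_iff.mp h0
    simp at hab
  obtain ⟨a', ha⟩ := Int.gcd_dvd_left a b
  obtain ⟨b', hb⟩ := Int.gcd_dvd_right a b
  have hmem : a' • v 0 + b' • v 1 ∈ Submodule.span ℤ (Set.range v) :=
    add_mem (Submodule.smul_mem _ _ (Submodule.subset_span ⟨0, rfl⟩))
      (Submodule.smul_mem _ _ (Submodule.subset_span ⟨1, rfl⟩))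
  have hinv : (g : K) * (a' • v 0 + b' • v 1) = 1 := by
    calc (g : K) * (a' • v 0 + b' • v 1) = ((g : ℤ) * a') • v 0 + ((g : ℤ) * b') • v 1 := by
          simp only [zsmul_eq_mul]; push_cast; ring
      _ = 1 := by rw [← ha, ← hb, hab]
  exact hprim g (by omega) (eq_inv_of_mul_eq_one_right hinv ▸ hmem)

theorem exists_mem_span_discr_pair_one_eq {K : Type*} [Field K] [CharZero K] {v : Fin 2 → K}
    (h1 : (1 : K) ∈ Submodule.span ℤ (Set.range v))
    (hprim : ∀ d : ℕ, 2 ≤ d → (d : K)⁻¹ ∉ Submodule.span ℤ (Set.range v)) :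
    ∃ e ∈ Submodule.span ℤ (Set.range v), Algebra.discr ℚ ![1, e] = Algebra.discr ℚ v := by
  obtain ⟨c, hc⟩ := (Submodule.mem_span_range_iff_exists_fun ℤ).mp h1
  rw [Fin.sum_univ_two] at hc
  obtain ⟨x, y, hxy⟩ := isCoprime_of_smul_add_smul_eq_one hc hprim
  refine ⟨(-y) • v 0 + x • v 1, add_mem (Submodule.smul_mem _ _ (Submodule.subset_span ⟨0, rfl⟩))
    (Submodule.smul_mem _ _ (Submodule.subset_span ⟨1, rfl⟩)), ?_⟩
  let P : Matrix (Fin 2) (Fin 2) ℚ := !![(c 0 : ℚ), -y; c 1, x]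
  have hP : v ᵥ* P.map (algebraMap ℚ K) = ![1, (-y) • v 0 + x • v 1] := by
    rw [← hc]
    ext i
    fin_cases i <;>
      simp only [P, vecMul, dotProduct, Fin.sum_univ_two, map_apply, of_apply, cons_val',
        cons_val_zero, cons_val_one, cons_val_fin_one, eq_ratCast, Rat.cast_intCast, Rat.cast_neg,
        zsmul_eq_mul, neg_smul, Fin.zero_eta, Fin.mk_one] <;> ring
  have hdet : P.det = 1 := by
    simp only [P, Matrix.det_fin_two_of]
    exact_mod_cast (by linear_combination hxy : (c 0 : ℤ) * x - -y * c 1 = 1)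
  rw [← hP, Algebra.discr_of_matrix_vecMul, hdet, one_pow, one_mul]

section RealQuadratic

variable {F : Type*} [Field F] [NumberField F] {σ σ' : F →+* ℝ}

theorem trace_eq_add_of_finrank_eq_two (hdeg : finrank ℚ F = 2) (hσ : σ ≠ σ') (x : F) :
    ((Algebra.trace ℚ F x : ℚ) : ℝ) = σ x + σ' x := by
  classical
  set α : F →ₐ[ℚ] ℂ := (Complex.ofRealHom.comp σ).toRatAlgHom
  set α' : F →ₐ[ℚ] ℂ := (Complex.ofRealHom.comp σ').toRatAlgHom
  have hne : α ≠ α' := by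
    obtain ⟨z, hz⟩ := DFunLike.ne_iff.mp hσ
    exact DFunLike.ne_iff.mpr ⟨z, fun h => hz (Complex.ofReal_injective h)⟩
  have huniv : (Finset.univ : Finset (F →ₐ[ℚ] ℂ)) = {α, α'} := by
    refine (Finset.eq_univ_of_card _ ?_).symm
    rw [Finset.card_pair hne, ← Fintype.card_congr (RingHom.equivRatAlgHom (R := F) (S := ℂ)),
      NumberField.Embeddings.card F ℂ, hdeg]
  have h := trace_eq_sum_embeddings (K := ℚ) (L := F) ℂ (x := x)
  rw [huniv, Finset.sum_pair hne] at h
  exact_mod_cast (by simpa [α, α', RingHom.toRatAlgHom] using h :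
    ((Algebra.trace ℚ F x : ℚ) : ℂ) = ((σ x + σ' x : ℝ) : ℂ))

theorem discr_pair_one_eq_sq_sub (hdeg : finrank ℚ F = 2) (hσ : σ ≠ σ') (e : F) :
    ((Algebra.discr ℚ ![1, e] : ℚ) : ℝ) = (σ' e - σ e) ^ 2 := by
  have ht := trace_eq_add_of_finrank_eq_two hdeg hσ
  rw [Algebra.discr_def, Matrix.det_fin_two]
  simp only [Algebra.traceMatrix_apply, Algebra.traceForm_apply]
  push_cast
  simp only [ht, map_mul, map_one]
  ring

end RealQuadratic

theorem exists_int_weighted_sq_sub_lt {A B s s' : ℝ} (hA : 0 < A) (hB : 0 < B)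
    (hss' : (s' - s) ^ 2 < 3) : ∃ k : ℤ, A * (s - k) ^ 2 + B * (s' - k) ^ 2 < A + B := by
  set k := round ((A * s + B * s') / (A + B))
  refine ⟨k, ?_⟩
  have hround : |A * (s - k) + B * (s' - k)| ≤ (A + B) / 2 := by
    have h := abs_sub_round ((A * s + B * s') / (A + B))
    rw [show A * (s - k) + B * (s' - k) = (A + B) * ((A * s + B * s') / (A + B) - k) by
      field_simp; ring, abs_mul, abs_of_pos (by positivity)]
    nlinarith
  have hsq := sq_le_sq' (abs_le.mp hround).1 (abs_le.mp hround).2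
  have lagrange : (A + B) * (A * (s - k) ^ 2 + B * (s' - k) ^ 2) =
      (A * (s - k) + B * (s' - k)) ^ 2 + A * B * (s' - s) ^ 2 := by ring
  by_contra! h
  nlinarith [mul_pos hA hB, sq_nonneg (A - B),
    mul_le_mul_of_nonneg_left h (by positivity : 0 ≤ A + B)]

theorem sq_mul_lt_three_of_sqrt_lt_inv {N D : ℝ} (hN : 0 < N) (h : √(D / 3) < N⁻¹) :
    N ^ 2 * D < 3 := by
  rw [Real.sqrt_lt' (by positivity), div_lt_iff₀ (by norm_num), inv_pow] at h
  calc N ^ 2 * D < N ^ 2 * ((N ^ 2)⁻¹ * 3) := by gcongr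
    _ = 3 := by field_simp

/-- Corollary 4.7: a nonzero fractional ideal of a real quadratic field whose inverse has
absolute norm strictly greater than `√(Δ_F/3)` is not 1-reduced. -/
theorem not_oneReduced_of_absNorm_inv_gt {F : Type*} [Field F] [NumberField F]
    (hdeg : Module.finrank ℚ F = 2)
    (σ σ' : F →+* ℝ) (hσ : σ ≠ σ')
    (I : FractionalIdeal (𝓞 F)⁰ F) (hI0 : I ≠ 0)
    (hnorm : Real.sqrt ((discr F : ℝ) / 3) < (FractionalIdeal.absNorm I⁻¹ : ℝ)) :
    ¬ IsOneReduced σ σ' I := by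
  rintro ⟨⟨h1, hprim⟩, u₁, u₂, hu₁, hu₂, hmin⟩
  set U := Units.mk0 I hI0
  have hcard : Fintype.card (Free.ChooseBasisIndex ℤ U) = 2 := by
    rw [← finrank_eq_card_chooseBasisIndex, fractionalIdeal_rank, RingOfIntegers.rank, hdeg]
  set v := basisOfFractionalIdeal F U ∘ (Fintype.equivFinOfCardEq hcard).symm
  have hspan : ∀ x, x ∈ Submodule.span ℤ (Set.range v) ↔ x ∈ I := by
    intro x
    rw [EquivLike.range_comp, mem_span_basisOfFractionalIdeal]
    rfl
  obtain ⟨e, he, hdisc⟩ := exists_mem_span_discr_pair_one_eq ((hspan 1).2 h1)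
    (fun d hd => (hspan _).not.2 (hprim d hd))
  set N : ℝ := ((FractionalIdeal.absNorm I : ℚ) : ℝ)
  have hN : 0 < N := Rat.cast_pos.mpr <| (FractionalIdeal.absNorm_nonneg I).lt_of_ne'
    (FractionalIdeal.absNorm_eq_zero_iff.not.mpr hI0)
  have hsq : (σ' e - σ e) ^ 2 = N ^ 2 * discr F := by
    rw [← discr_pair_one_eq_sq_sub hdeg hσ, hdisc, Algebra.discr_reindex,
      discr_basisOfFractionalIdeal]
    push_cast
    rfl
  obtain ⟨k, hk⟩ := exists_int_weighted_sq_sub_lt (pow_pos hu₁ 2) (pow_pos hu₂ 2)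
    (hsq ▸ sq_mul_lt_three_of_sqrt_lt_inv hN (by simpa [map_inv₀] using hnorm))
  have hne : e - k ≠ 0 := by
    intro h
    rw [sub_eq_zero.mp h, map_intCast, map_intCast, sub_self, eq_comm] at hsq
    exact mul_ne_zero (pow_ne_zero 2 hN.ne') (Int.cast_ne_zero.mpr (discr_ne_zero F))
      (by simpa using hsq)
  refine (hmin (e - k) ((hspan _).1 (sub_mem he ?_)) hne).not_gt ?_
  · simpa using Submodule.smul_mem _ k ((hspan 1).2 h1)
  · simp only [normU, map_one, map_sub, map_intCast, one_pow, mul_one]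
    exact Real.sqrt_lt_sqrt (by positivity) hk
end

section
/- Let F be a real quadratic field with real embeddings σ, σ' and discriminant Δ_F, and let I = ℤ·1 + ℤ·f be a reduced fractional ideal of F, where σ(f) = (b + √Δ_F)/(2a) and σ'(f) = (b − √Δ_F)/(2a) for integers a > 0, b, c with Δ_F = b² − 4ac and |√Δ_F − 2a| < b < √Δ_F. If either (1) a ≤ √(Δ_F/4), or (2) √(Δ_F/4) ≤ a ≤ √(Δ_F/3) and √(4a² − Δ_F) ≤ b ≤ 2a − √(4a² − Δ_F), then 1 is a shortest nonzero vector of the lattice I, i.e. σ(g)² + σ'(g)² ≥ 2 for every nonzero g ∈ I. -/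
open NumberField
open scoped nonZeroDivisors

private lemma aux_key (a b D : ℝ) (m n : ℤ) (ha : 0 < a) (hD : 0 < D)
    (hmn : m ≠ 0 ∨ n ≠ 0)
    (hcase : a ^ 2 ≤ D / 4 ∨ (D / 4 ≤ a ^ 2 ∧ a ^ 2 ≤ D / 3 ∧
      Real.sqrt (4 * a ^ 2 - D) ≤ b ∧ b ≤ 2 * a - Real.sqrt (4 * a ^ 2 - D))) :
    4 * a ^ 2 ≤ (2 * a * (m : ℝ) + (n : ℝ) * b) ^ 2 + (n : ℝ) ^ 2 * D := by
  rcases eq_or_ne n 0 with rfl | hn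
  · have hm : m ≠ 0 := by tauto
    have hm1 : (1:ℝ) ≤ (m:ℝ)^2 := by
      have h1 : (1:ℤ) ≤ m^2 := by nlinarith [Int.one_le_abs hm, sq_abs m]
      exact_mod_cast h1
    push_cast
    nlinarith [sq_nonneg ((a:ℝ)*(m:ℝ)), ha]
  · have hn1 : (1:ℝ) ≤ (n:ℝ)^2 := by
      have h1 : (1:ℤ) ≤ n^2 := by nlinarith [Int.one_le_abs hn, sq_abs n]
      exact_mod_cast h1
    rcases hcase with h1 | ⟨h1, h2, h3, h4⟩
    · nlinarith [sq_nonneg (2*a*(m:ℝ) + (n:ℝ)*b),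
        mul_nonneg (by linarith : (0:ℝ) ≤ (n:ℝ)^2 - 1) hD.le]
    · set t : ℝ := Real.sqrt (4*a^2 - D) with htdef
      have ht0 : 0 ≤ t := Real.sqrt_nonneg _
      have ht2 : t ^ 2 = 4*a^2 - D := Real.sq_sqrt (by linarith)
      rcases lt_or_ge (n^2) 4 with hn4 | hn4
      · have hnm2 : -2 < n := by nlinarith
        have hnp2 : n < 2 := by nlinarith
        have hn1' : n = 1 ∨ n = -1 := by omega
        rcases hn1' with rfl | rfl
        · push_cast
          rcases le_or_gt 0 m with hm0 | hm0
          · have hmR : (0:ℝ) ≤ (m:ℝ) := by exact_mod_cast hm0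
            have hP : t ≤ 2*a*(m:ℝ) + b := by
              linarith [mul_nonneg ha.le hmR]
            nlinarith [ht2, ht0, hP, mul_self_le_mul_self ht0 hP]
          · have hmR : (m:ℝ) ≤ -1 := by exact_mod_cast (by omega : m ≤ -1)
            have hP : t ≤ -(2*a*(m:ℝ) + b) := by nlinarith
            nlinarith [ht2, ht0, hP, mul_self_le_mul_self ht0 hP]
        · push_cast
          rcases le_or_gt m 0 with hm0 | hm0
          · have hmR : (m:ℝ) ≤ 0 := by exact_mod_cast hm0
            have hP : t ≤ -(2*a*(m:ℝ) + (-1)*b) := by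
              nlinarith [mul_nonneg ha.le (by linarith : (0:ℝ) ≤ -(m:ℝ))]
            nlinarith [ht2, ht0, hP, mul_self_le_mul_self ht0 hP]
          · have hmR : (1:ℝ) ≤ (m:ℝ) := by exact_mod_cast (by omega : 1 ≤ m)
            have hP : t ≤ 2*a*(m:ℝ) + (-1)*b := by nlinarith
            nlinarith [ht2, ht0, hP, mul_self_le_mul_self ht0 hP]
      · have hn4R : (4:ℝ) ≤ (n:ℝ)^2 := by exact_mod_cast hn4
        nlinarith [sq_nonneg (2*a*(m:ℝ) + (n:ℝ)*b),
          mul_nonneg (by linarith : (0:ℝ) ≤ (n:ℝ)^2 - 4) hD.le]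

/-- Lemma 4.2: under the stated bounds on `a` and `b`, the element `1` is a shortest nonzero
vector of the lattice `I = ℤ + ℤf`, i.e. `σ(g)² + σ'(g)² ≥ 2` for every nonzero `g ∈ I`. -/
theorem one_is_shortest {F : Type*} [Field F] [NumberField F]
    (hdeg : Module.finrank ℚ F = 2)
    (σ σ' : F →+* ℝ) (hσ : σ ≠ σ')
    (I : FractionalIdeal (𝓞 F)⁰ F) (f : F) (a b c : ℤ) (ha : 0 < a)
    (habc : (discr F : ℤ) = b ^ 2 - 4 * a * c)
    (hσf : σ f = ((b : ℝ) + Real.sqrt (discr F)) / (2 * a))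
    (hσ'f : σ' f = ((b : ℝ) - Real.sqrt (discr F)) / (2 * a))
    (hb1 : |Real.sqrt (discr F) - 2 * a| < (b : ℝ))
    (hb2 : (b : ℝ) < Real.sqrt (discr F))
    (hI : ∀ x : F, x ∈ I ↔ ∃ m n : ℤ, x = (m : F) + (n : F) * f)
    (hred : IsReducedIdeal σ σ' I)
    (hcase : (a : ℝ) ≤ Real.sqrt ((discr F : ℝ) / 4) ∨
      (Real.sqrt ((discr F : ℝ) / 4) ≤ (a : ℝ) ∧ (a : ℝ) ≤ Real.sqrt ((discr F : ℝ) / 3) ∧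
        Real.sqrt (4 * (a : ℝ) ^ 2 - (discr F : ℝ)) ≤ (b : ℝ) ∧
        (b : ℝ) ≤ 2 * a - Real.sqrt (4 * (a : ℝ) ^ 2 - (discr F : ℝ)))) :
    ∀ g ∈ I, g ≠ 0 → 2 ≤ (σ g) ^ 2 + (σ' g) ^ 2 := by
  intro g hg hg0
  obtain ⟨m, n, rfl⟩ := (hI g).mp hg
  have haR : (0:ℝ) < (a:ℝ) := by exact_mod_cast ha
  set D : ℝ := ((discr F : ℤ) : ℝ) with hDdef
  set s : ℝ := Real.sqrt D with hsdef
  have hb0 : (0:ℝ) < (b:ℝ) := lt_of_le_of_lt (abs_nonneg _) hb1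
  have hs0 : 0 < s := lt_trans hb0 hb2
  have hD0 : 0 < D := Real.sqrt_pos.mp hs0
  have hs2 : s ^ 2 = D := Real.sq_sqrt hD0.le
  have hσg : σ ((m:F) + (n:F) * f) = (m:ℝ) + (n:ℝ) * (((b:ℝ) + s) / (2*(a:ℝ))) := by
    simp [map_add, map_mul, hσf]
  have hσ'g : σ' ((m:F) + (n:F) * f) = (m:ℝ) + (n:ℝ) * (((b:ℝ) - s) / (2*(a:ℝ))) := by
    simp [map_add, map_mul, hσ'f]
  rw [hσg, hσ'g]
  have key : 4*(a:ℝ)^2 ≤ (2*(a:ℝ)*(m:ℝ) + (n:ℝ)*(b:ℝ))^2 + (n:ℝ)^2 * D := by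
    apply aux_key _ _ _ _ _ haR hD0
    · by_contra hc
      push_neg at hc
      apply hg0
      rw [hc.1, hc.2]
      push_cast; ring
    · rcases hcase with h1 | ⟨h1, h2, h3, h4⟩
      · left
        have hq : Real.sqrt (D/4) ^ 2 = D/4 := Real.sq_sqrt (by linarith)
        have := pow_le_pow_left₀ haR.le h1 2
        linarith
      · right
        have hq4 : Real.sqrt (D/4) ^ 2 = D/4 := Real.sq_sqrt (by linarith)
        have hq3 : Real.sqrt (D/3) ^ 2 = D/3 := Real.sq_sqrt (by linarith)
        have e1 := pow_le_pow_left₀ (Real.sqrt_nonneg (D/4)) h1 2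
        have e2 := pow_le_pow_left₀ haR.le h2 2
        exact ⟨by linarith, by linarith, h3, h4⟩
  have hexp : ((m:ℝ) + (n:ℝ)*(((b:ℝ) + s)/(2*(a:ℝ))))^2
      + ((m:ℝ) + (n:ℝ)*(((b:ℝ) - s)/(2*(a:ℝ))))^2
      = (2*(2*(a:ℝ)*(m:ℝ) + (n:ℝ)*(b:ℝ))^2 + 2*(n:ℝ)^2*s^2) / (4*(a:ℝ)^2) := by
    field_simp
    ring
  rw [hexp, le_div_iff₀ (by positivity)]
  have hns : (n:ℝ)^2 * s^2 = (n:ℝ)^2 * D := by rw [hs2]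
  nlinarith [key, hns]
end

section
/- Let F be a real quadratic field with real embeddings σ, σ' and discriminant Δ_F, and let I = ℤ·1 + ℤ·f be a reduced fractional ideal of F, where σ(f) = (b + √Δ_F)/(2a) and σ'(f) = (b − √Δ_F)/(2a) for integers a > 0, b, c with Δ_F = b² − 4ac and |√Δ_F − 2a| < b < √Δ_F. If √(Δ_F/4) ≤ a ≤ √(Δ_F/3) and a − √(Δ_F − 3a²) ≤ b ≤ √(4a² − Δ_F), then: (i) f is a shortest nonzero vector of the lattice I, i.e. σ(g)² + σ'(g)² ≥ σ(f)² + σ'(f)² for every nonzero g ∈ I; and (ii) the size-reduction condition |σ(f) + σ'(f)| ≤ (σ(f)² + σ'(f)²)/2 holds, so that the vectors (σ(f), σ'(f)) and (1,1) form an LLL-reduced basis of the lattice I. -/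
open NumberField
open scoped nonZeroDivisors

/-!
In the coordinates `g = m + n f` the squared length of `g` is the binary quadratic form
`q n² + 2 s n m + 2 m²` with `s = σ f + σ' f = b / a` and `q = σ(f)² + σ'(f)² = (b² + Δ) / (2a²)`.
A binary form `A x² + B x y + C y²` with `|B| ≤ A ≤ C` is Lagrange-reduced and its nonzero
integral values are at least `A`. Here `|B| ≤ A` is the size-reduction condition
`4ab ≤ b² + Δ`, which the bound `a - √(Δ - 3a²) ≤ b` provides, and `A ≤ C` is `b² + Δ ≤ 4a²`,
which is the bound `b ≤ √(4a² - Δ)`.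
-/

theorem Int.one_le_sq_sub_abs_mul_add_sq {m n : ℤ} (h : m ≠ 0 ∨ n ≠ 0) :
    1 ≤ m ^ 2 - |m * n| + n ^ 2 := by
  rw [abs_mul, ← sq_abs m, ← sq_abs n]
  have hm := abs_nonneg m
  have hn := abs_nonneg n
  rcases h.imp Int.one_le_abs Int.one_le_abs with h | h <;>
    rcases le_total |m| |n| with hmn | hmn <;> nlinarith

theorem le_mul_sq_add_mul_mul_add_mul_sq {A B C : ℝ} (hBA : |B| ≤ A) (hAC : A ≤ C)
    {m n : ℤ} (h : m ≠ 0 ∨ n ≠ 0) :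
    A ≤ A * m ^ 2 + B * m * n + C * n ^ 2 := by
  have hone : (1 : ℝ) ≤ (m : ℝ) ^ 2 - |(m : ℝ) * n| + (n : ℝ) ^ 2 := by
    exact_mod_cast Int.one_le_sq_sub_abs_mul_add_sq h
  have hcross : -(A * |(m : ℝ) * n|) ≤ B * m * n := by
    rw [mul_assoc]
    calc -(A * |(m : ℝ) * n|) ≤ -(|B| * |(m : ℝ) * n|) := by gcongr
      _ = -|B * (m * n)| := by rw [abs_mul B]
      _ ≤ B * (m * n) := neg_abs_le _
  have hA : 0 ≤ A := (abs_nonneg B).trans hBA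
  nlinarith [sq_nonneg (n : ℝ)]

theorem sq_add_sq_le_of_abs_add_le {R : Type*} [Ring R] (σ σ' : R →+* ℝ) {f : R}
    (hsize : |σ f + σ' f| ≤ (σ f ^ 2 + σ' f ^ 2) / 2) (hle : σ f ^ 2 + σ' f ^ 2 ≤ 2)
    {m n : ℤ} (hmn : (m : R) + n * f ≠ 0) :
    σ f ^ 2 + σ' f ^ 2 ≤ σ (m + n * f) ^ 2 + σ' (m + n * f) ^ 2 := by
  have h : n ≠ 0 ∨ m ≠ 0 := by
    by_contra! h
    simp [h.1, h.2] at hmn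
  have hBA : |2 * (σ f + σ' f)| ≤ σ f ^ 2 + σ' f ^ 2 := by
    rw [abs_mul, abs_two]; linarith
  simp only [map_add, map_mul, map_intCast]
  linear_combination le_mul_sq_add_mul_mul_add_mul_sq hBA hle h

section

variable {a b D : ℝ}

theorem quadratic_roots_add (ha : a ≠ 0) :
    (b + √D) / (2 * a) + (b - √D) / (2 * a) = b / a := by
  field_simp; ring

theorem quadratic_roots_sq_add_sq (ha : a ≠ 0) (hD : 0 ≤ D) :
    ((b + √D) / (2 * a)) ^ 2 + ((b - √D) / (2 * a)) ^ 2 = (b ^ 2 + D) / (2 * a ^ 2) := by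
  field_simp
  linear_combination 2 * Real.sq_sqrt hD

theorem reduction_inequalities_of_sqrt_bounds (ha : 0 < a) (ha1 : √(D / 4) ≤ a)
    (ha2 : a ≤ √(D / 3)) (hb3 : a - √(D - 3 * a ^ 2) ≤ b) (hb4 : b ≤ √(4 * a ^ 2 - D)) :
    0 ≤ D ∧ 0 ≤ b ∧ b ^ 2 + D ≤ 4 * a ^ 2 ∧ 4 * a * b ≤ b ^ 2 + D := by
  have hD4 : D ≤ 4 * a ^ 2 := by linarith [(Real.sqrt_le_left ha.le).1 ha1]
  have hD3 : 3 * a ^ 2 ≤ D := by linarith [(Real.le_sqrt' ha).1 ha2]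
  have hb : 0 ≤ b := by
    have : √(D - 3 * a ^ 2) ≤ a := (Real.sqrt_le_left ha.le).2 (by linarith)
    linarith
  have hbD : b ^ 2 ≤ 4 * a ^ 2 - D := (Real.le_sqrt hb (by linarith)).1 hb4
  have hba : b ≤ a := by nlinarith
  have hab : (a - b) ^ 2 ≤ D - 3 * a ^ 2 :=
    (Real.le_sqrt (sub_nonneg.2 hba) (by linarith)).1 (by linarith)
  refine ⟨by linarith, hb, by linarith, ?_⟩
  nlinarith [mul_nonneg (sub_nonneg.2 hba) (by linarith : 0 ≤ 2 * a - b)]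

end

theorem f_is_shortest_and_LLL_general {F : Type*} [Field F] [NumberField F]
    (σ σ' : F →+* ℝ)
    (I : FractionalIdeal (𝓞 F)⁰ F) (f : F) (a b : ℤ) (ha : 0 < a)
    (hσf : σ f = ((b : ℝ) + Real.sqrt (discr F)) / (2 * a))
    (hσ'f : σ' f = ((b : ℝ) - Real.sqrt (discr F)) / (2 * a))
    (hI : ∀ x : F, x ∈ I ↔ ∃ m n : ℤ, x = (m : F) + (n : F) * f)
    (ha1 : Real.sqrt ((discr F : ℝ) / 4) ≤ (a : ℝ))
    (ha2 : (a : ℝ) ≤ Real.sqrt ((discr F : ℝ) / 3))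
    (hb3 : (a : ℝ) - Real.sqrt ((discr F : ℝ) - 3 * (a : ℝ) ^ 2) ≤ (b : ℝ))
    (hb4 : (b : ℝ) ≤ Real.sqrt (4 * (a : ℝ) ^ 2 - (discr F : ℝ))) :
    (∀ g ∈ I, g ≠ 0 → (σ f) ^ 2 + (σ' f) ^ 2 ≤ (σ g) ^ 2 + (σ' g) ^ 2) ∧
      |σ f + σ' f| ≤ ((σ f) ^ 2 + (σ' f) ^ 2) / 2 := by
  have ha' : (0 : ℝ) < a := by exact_mod_cast ha
  obtain ⟨hD, hb, hbD, hkey⟩ := reduction_inequalities_of_sqrt_bounds ha' ha1 ha2 hb3 hb4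
  have hsum : σ f + σ' f = b / a := by rw [hσf, hσ'f, quadratic_roots_add ha'.ne']
  have hsq : σ f ^ 2 + σ' f ^ 2 = (b ^ 2 + discr F) / (2 * a ^ 2) := by
    rw [hσf, hσ'f, quadratic_roots_sq_add_sq ha'.ne' hD]
  have hreduced : |σ f + σ' f| ≤ (σ f ^ 2 + σ' f ^ 2) / 2 := by
    rw [hsum, hsq, abs_of_nonneg (by positivity), div_div,
      div_le_div_iff₀ ha' (by positivity)]
    nlinarith
  have hle : σ f ^ 2 + σ' f ^ 2 ≤ 2 := by
    rw [hsq, div_le_iff₀ (by positivity)]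
    linarith
  refine ⟨fun g hg hg0 => ?_, hreduced⟩
  obtain ⟨m, n, rfl⟩ := (hI g).1 hg
  exact sq_add_sq_le_of_abs_add_le σ σ' hreduced hle hg0

/-- Lemma 4.3: under the stated bounds on `a` and `b`, `f` is a shortest nonzero vector of the
lattice `I = ℤ + ℤf`, and `(σ f, σ' f)` together with `(1,1)` form an LLL-reduced basis, the
size-reduction condition being `|σ f + σ' f| ≤ (σ(f)² + σ'(f)²)/2`. -/
theorem f_is_shortest_and_LLL {F : Type*} [Field F] [NumberField F]
    (hdeg : Module.finrank ℚ F = 2)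
    (σ σ' : F →+* ℝ) (hσ : σ ≠ σ')
    (I : FractionalIdeal (𝓞 F)⁰ F) (f : F) (a b c : ℤ) (ha : 0 < a)
    (habc : (discr F : ℤ) = b ^ 2 - 4 * a * c)
    (hσf : σ f = ((b : ℝ) + Real.sqrt (discr F)) / (2 * a))
    (hσ'f : σ' f = ((b : ℝ) - Real.sqrt (discr F)) / (2 * a))
    (hb1 : |Real.sqrt (discr F) - 2 * a| < (b : ℝ))
    (hb2 : (b : ℝ) < Real.sqrt (discr F))
    (hI : ∀ x : F, x ∈ I ↔ ∃ m n : ℤ, x = (m : F) + (n : F) * f)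
    (hred : IsReducedIdeal σ σ' I)
    (ha1 : Real.sqrt ((discr F : ℝ) / 4) ≤ (a : ℝ))
    (ha2 : (a : ℝ) ≤ Real.sqrt ((discr F : ℝ) / 3))
    (hb3 : (a : ℝ) - Real.sqrt ((discr F : ℝ) - 3 * (a : ℝ) ^ 2) ≤ (b : ℝ))
    (hb4 : (b : ℝ) ≤ Real.sqrt (4 * (a : ℝ) ^ 2 - (discr F : ℝ))) :
    (∀ g ∈ I, g ≠ 0 → (σ f) ^ 2 + (σ' f) ^ 2 ≤ (σ g) ^ 2 + (σ' g) ^ 2) ∧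
      |σ f + σ' f| ≤ ((σ f) ^ 2 + (σ' f) ^ 2) / 2 :=
  f_is_shortest_and_LLL_general σ σ' I f a b ha hσf hσ'f hI ha1 ha2 hb3 hb4
end

section
/- Let F be a real quadratic field with real embeddings σ, σ' and discriminant Δ_F, and let I = ℤ·1 + ℤ·f be a reduced fractional ideal of F, where σ(f) = (b + √Δ_F)/(2a) and σ'(f) = (b − √Δ_F)/(2a) for integers a > 0, b, c with Δ_F = b² − 4ac and |√Δ_F − 2a| < b < √Δ_F. If √(Δ_F/4) ≤ a ≤ √(Δ_F/3) and 2a − √(4a² − Δ_F) ≤ b ≤ √Δ_F, then: (i) f − 1 is a shortest nonzero vector of the lattice I, i.e. σ(g)² + σ'(g)² ≥ σ(f−1)² + σ'(f−1)² for every nonzero g ∈ I; and (ii) the size-reduction condition |σ(f−1) + σ'(f−1)| ≤ (σ(f−1)² + σ'(f−1)²)/2 holds, so that the vectors (σ(f−1), σ'(f−1)) and (1,1) form an LLL-reduced basis of the lattice I. -/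
open NumberField
open scoped nonZeroDivisors

lemma myaux (a b s m n : ℝ) (ha : a ≠ 0) :
    (m + n * ((b + s) / (2 * a))) ^ 2 + (m + n * ((b - s) / (2 * a))) ^ 2
      = ((2 * a * m + n * b) ^ 2 + n ^ 2 * s ^ 2) / (2 * a ^ 2) := by
  field_simp
  ring

lemma mykey1 (a b m : ℤ) (ha : 0 < a) (hab : a ≤ b) (hb2a : b ≤ 2 * a) :
    (2 * a - b) ^ 2 ≤ (2 * a * m + b) ^ 2 := by
  rcases le_or_gt 0 m with hm | hm
  · nlinarith [mul_nonneg ha.le hm]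
  · have hm1 : m ≤ -1 := by linarith
    have h1 : a * m ≤ -a := by nlinarith
    nlinarith [mul_nonneg (show (0:ℤ) ≤ -(a * m + b - a) by linarith)
      (show (0:ℤ) ≤ -(a * m + a) by linarith)]

lemma mykey (a b K m n : ℤ) (ha : 0 < a) (hK3 : 3 * a ^ 2 ≤ K)
    (hab : a ≤ b) (hb2a : b ≤ 2 * a) (hsq : (2 * a - b) ^ 2 ≤ 4 * a ^ 2 - K)
    (hmn : ¬(m = 0 ∧ n = 0)) :
    (2 * a - b) ^ 2 + K ≤ (2 * a * m + n * b) ^ 2 + n ^ 2 * K := by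
  have ha2 : (0:ℤ) < a ^ 2 := by positivity
  by_cases hn0 : n = 0
  · subst hn0
    have hm : m ≠ 0 := by tauto
    have hm2 : 1 ≤ m ^ 2 := pow_two_pos_of_ne_zero hm
    nlinarith [mul_le_mul_of_nonneg_left hm2 (show (0:ℤ) ≤ 4 * a ^ 2 by positivity)]
  by_cases hn1 : n = 1
  · subst hn1
    have := mykey1 a b m ha hab hb2a
    nlinarith [this]
  by_cases hn2 : n = -1
  · subst hn2
    have h := mykey1 a b (-m) ha hab hb2a
    have h' : (2 * a * (-m) + b) ^ 2 = (2 * a * m + (-1) * b) ^ 2 := by ring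
    rw [h'] at h
    nlinarith [h]
  · have hn : n ≤ -2 ∨ 2 ≤ n := by omega
    have hn4 : 4 ≤ n ^ 2 := by rcases hn with h | h <;> nlinarith
    have hK0 : (0:ℤ) ≤ K := by nlinarith
    have h4K : 4 * K ≤ n ^ 2 * K := mul_le_mul_of_nonneg_right hn4 hK0
    nlinarith [sq_nonneg (2 * a * m + n * b)]

/-- Lemma 4.4: under the stated bounds on `a` and `b`, `f - 1` is a shortest nonzero vector of
the lattice `I = ℤ + ℤf`, and `(σ(f-1), σ'(f-1))` together with `(1,1)` form an LLL-reduced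
basis, the size-reduction condition being `|σ(f-1) + σ'(f-1)| ≤ (σ(f-1)² + σ'(f-1)²)/2`. -/
theorem f_sub_one_is_shortest_and_LLL {F : Type*} [Field F] [NumberField F]
    (hdeg : Module.finrank ℚ F = 2)
    (σ σ' : F →+* ℝ) (hσ : σ ≠ σ')
    (I : FractionalIdeal (𝓞 F)⁰ F) (f : F) (a b c : ℤ) (ha : 0 < a)
    (habc : (discr F : ℤ) = b ^ 2 - 4 * a * c)
    (hσf : σ f = ((b : ℝ) + Real.sqrt (discr F)) / (2 * a))
    (hσ'f : σ' f = ((b : ℝ) - Real.sqrt (discr F)) / (2 * a))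
    (hb1 : |Real.sqrt (discr F) - 2 * a| < (b : ℝ))
    (hb2 : (b : ℝ) < Real.sqrt (discr F))
    (hI : ∀ x : F, x ∈ I ↔ ∃ m n : ℤ, x = (m : F) + (n : F) * f)
    (hred : IsReducedIdeal σ σ' I)
    (ha1 : Real.sqrt ((discr F : ℝ) / 4) ≤ (a : ℝ))
    (ha2 : (a : ℝ) ≤ Real.sqrt ((discr F : ℝ) / 3))
    (hb3 : 2 * (a : ℝ) - Real.sqrt (4 * (a : ℝ) ^ 2 - (discr F : ℝ)) ≤ (b : ℝ)) :
    (∀ g ∈ I, g ≠ 0 → (σ (f - 1)) ^ 2 + (σ' (f - 1)) ^ 2 ≤ (σ g) ^ 2 + (σ' g) ^ 2) ∧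
      |σ (f - 1) + σ' (f - 1)| ≤ ((σ (f - 1)) ^ 2 + (σ' (f - 1)) ^ 2) / 2 := by
  have haR : (0:ℝ) < (a:ℝ) := by exact_mod_cast ha
  have hb0 : (0:ℝ) < (b:ℝ) := (abs_nonneg _).trans_lt hb1
  have hs0 : (0:ℝ) < Real.sqrt (discr F) := hb0.trans hb2
  have hK0 : (0:ℝ) < ((discr F : ℤ) : ℝ) := Real.sqrt_pos.mp hs0
  have hs2 : Real.sqrt ((discr F : ℤ) : ℝ) ^ 2 = ((discr F : ℤ) : ℝ) := Real.sq_sqrt hK0.le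
  have h1 := pow_le_pow_left₀ (Real.sqrt_nonneg (((discr F : ℤ) : ℝ) / 4)) ha1 2
  rw [Real.sq_sqrt (by linarith : (0:ℝ) ≤ ((discr F : ℤ) : ℝ) / 4)] at h1
  have hK4 : ((discr F : ℤ) : ℝ) ≤ 4 * (a:ℝ) ^ 2 := by linarith
  have h2 := pow_le_pow_left₀ haR.le ha2 2
  rw [Real.sq_sqrt (by linarith : (0:ℝ) ≤ ((discr F : ℤ) : ℝ) / 3)] at h2
  have hK3 : 3 * (a:ℝ) ^ 2 ≤ ((discr F : ℤ) : ℝ) := by linarith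
  have hr2 : Real.sqrt (4 * (a:ℝ) ^ 2 - ((discr F : ℤ) : ℝ)) ^ 2
      = 4 * (a:ℝ) ^ 2 - ((discr F : ℤ) : ℝ) := Real.sq_sqrt (by linarith)
  have hra : Real.sqrt (4 * (a:ℝ) ^ 2 - ((discr F : ℤ) : ℝ)) ≤ (a:ℝ) := by
    have h := Real.sqrt_le_sqrt (show 4 * (a:ℝ) ^ 2 - ((discr F : ℤ) : ℝ) ≤ (a:ℝ) ^ 2 by linarith)
    rwa [Real.sqrt_sq haR.le] at h
  have habR : (a:ℝ) ≤ (b:ℝ) := by linarith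
  have hb2aR : (b:ℝ) ≤ 2 * (a:ℝ) := by
    have h := Real.sqrt_le_sqrt hK4
    rw [show (4 * (a:ℝ) ^ 2) = (2 * (a:ℝ)) ^ 2 by ring, Real.sqrt_sq (by linarith)] at h
    linarith
  have hsqR : (2 * (a:ℝ) - (b:ℝ)) ^ 2 ≤ 4 * (a:ℝ) ^ 2 - ((discr F : ℤ) : ℝ) := by
    have h0 : (0:ℝ) ≤ 2 * (a:ℝ) - (b:ℝ) := by linarith
    have h3 := pow_le_pow_left₀ h0
      (show 2 * (a:ℝ) - (b:ℝ) ≤ Real.sqrt (4 * (a:ℝ) ^ 2 - ((discr F : ℤ) : ℝ)) by linarith) 2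
    rwa [hr2] at h3
  have habz : a ≤ b := by exact_mod_cast habR
  have hb2az : b ≤ 2 * a := by exact_mod_cast (show ((b:ℝ)) ≤ (((2 * a : ℤ)):ℝ) by push_cast; linarith)
  have hK3z : 3 * a ^ 2 ≤ (discr F : ℤ) := by
    exact_mod_cast (show (((3 * a ^ 2 : ℤ)):ℝ) ≤ ((discr F : ℤ) : ℝ) by push_cast; linarith)
  have hsqz : (2 * a - b) ^ 2 ≤ 4 * a ^ 2 - (discr F : ℤ) := by
    exact_mod_cast (show ((((2 * a - b) ^ 2 : ℤ)):ℝ) ≤ (((4 * a ^ 2 - (discr F : ℤ) : ℤ)):ℝ) by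
      push_cast; linarith)
  have h2a2 : (0:ℝ) < 2 * (a:ℝ) ^ 2 := by positivity
  have hσf1 : σ (f - 1) = (-1:ℝ) + 1 * (((b:ℝ) + Real.sqrt ((discr F : ℤ) : ℝ)) / (2 * (a:ℝ))) := by
    rw [map_sub, map_one, hσf]; ring
  have hσ'f1 : σ' (f - 1) = (-1:ℝ) + 1 * (((b:ℝ) - Real.sqrt ((discr F : ℤ) : ℝ)) / (2 * (a:ℝ))) := by
    rw [map_sub, map_one, hσ'f]; ring
  have e1 : σ (f - 1) ^ 2 + σ' (f - 1) ^ 2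
      = ((2 * (a:ℝ) - (b:ℝ)) ^ 2 + ((discr F : ℤ) : ℝ)) / (2 * (a:ℝ) ^ 2) := by
    rw [hσf1, hσ'f1, myaux _ _ _ _ _ haR.ne', hs2]
    ring
  constructor
  · intro g hg hg0
    obtain ⟨m, n, hx⟩ := (hI g).mp hg
    have hmn : ¬(m = 0 ∧ n = 0) := by
      rintro ⟨rfl, rfl⟩
      apply hg0
      rw [hx]; push_cast; ring
    have hσg : σ g = ((m:ℝ)) + (n:ℝ) * (((b:ℝ) + Real.sqrt ((discr F : ℤ) : ℝ)) / (2 * (a:ℝ))) := by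
      rw [hx, map_add, map_mul, map_intCast, map_intCast, hσf]
    have hσ'g : σ' g = ((m:ℝ)) + (n:ℝ) * (((b:ℝ) - Real.sqrt ((discr F : ℤ) : ℝ)) / (2 * (a:ℝ))) := by
      rw [hx, map_add, map_mul, map_intCast, map_intCast, hσ'f]
    have e2 : σ g ^ 2 + σ' g ^ 2
        = ((2 * (a:ℝ) * (m:ℝ) + (n:ℝ) * (b:ℝ)) ^ 2 + (n:ℝ) ^ 2 * ((discr F : ℤ) : ℝ))
          / (2 * (a:ℝ) ^ 2) := by
      rw [hσg, hσ'g, myaux _ _ _ _ _ haR.ne', hs2]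
    have hkz := mykey a b (discr F) m n ha hK3z habz hb2az hsqz hmn
    have hkR : (2 * (a:ℝ) - (b:ℝ)) ^ 2 + ((discr F : ℤ) : ℝ)
        ≤ (2 * (a:ℝ) * (m:ℝ) + (n:ℝ) * (b:ℝ)) ^ 2 + (n:ℝ) ^ 2 * ((discr F : ℤ) : ℝ) := by
      exact_mod_cast hkz
    rw [e1, e2]
    exact div_le_div_of_nonneg_right hkR h2a2.le
  · have e3 : σ (f - 1) + σ' (f - 1) = ((b:ℝ) - 2 * (a:ℝ)) / (a:ℝ) := by
      rw [hσf1, hσ'f1]; field_simp; ring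
    have e4 : |σ (f - 1) + σ' (f - 1)| = (2 * (a:ℝ) - (b:ℝ)) / (a:ℝ) := by
      rw [e3, abs_of_nonpos (div_nonpos_of_nonpos_of_nonneg (by linarith) haR.le)]
      ring
    rw [e4, e1]
    rw [show (((2 * (a:ℝ) - (b:ℝ)) ^ 2 + ((discr F : ℤ) : ℝ)) / (2 * (a:ℝ) ^ 2)) / 2
        = ((2 * (a:ℝ) - (b:ℝ)) ^ 2 + ((discr F : ℤ) : ℝ)) / (4 * (a:ℝ) ^ 2) by ring]
    rw [div_le_div_iff₀ haR (by positivity)]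
    have hbb : (a:ℝ) ^ 2 ≤ (b:ℝ) ^ 2 := by nlinarith
    have hfin : (0:ℝ) ≤ (a:ℝ) * ((b:ℝ) ^ 2 + ((discr F : ℤ) : ℝ) - 4 * (a:ℝ) ^ 2) :=
      mul_nonneg haR.le (by linarith)
    have heq : ((2 * (a:ℝ) - (b:ℝ)) ^ 2 + ((discr F : ℤ) : ℝ)) * (a:ℝ)
        - (2 * (a:ℝ) - (b:ℝ)) * (4 * (a:ℝ) ^ 2)
        = (a:ℝ) * ((b:ℝ) ^ 2 + ((discr F : ℤ) : ℝ) - 4 * (a:ℝ) ^ 2) := by ring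
    linarith [hfin, heq]
end

section
/- Let F be a number field, I a nonzero fractional ideal of F, u = (u_w)_w a family of positive reals indexed by the infinite places of F, and f ∈ I a nonzero element that is shortest in I with respect to u, i.e. ‖f‖_u ≤ ‖g‖_u for every nonzero g ∈ I. Then the fractional ideal J = f⁻¹·I is 1-reduced; indeed 1 is primitive in J, and with v defined by v_w = u_w·w(f) one has ‖1‖_v ≤ ‖h‖_v for every nonzero h ∈ J. -/
open NumberField
open scoped nonZeroDivisors

/-- `‖g‖_u² = Σ_w m_w·u_w²·w(g)²`, summing over the infinite places `w` of `F`, where `m_w` is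
the multiplicity (1 for a real place, 2 for a complex place); `‖g‖_u` is its square root. -/
noncomputable def normUInf {F : Type*} [Field F] [NumberField F]
    (u : InfinitePlace F → ℝ) (g : F) : ℝ :=
  Real.sqrt (∑ w : InfinitePlace F, (w.mult : ℝ) * (u w) ^ 2 * (w g) ^ 2)

/-- `N(u) = Π_w u_w^{m_w}` over the infinite places `w` of `F`. -/
noncomputable def normProdInf {F : Type*} [Field F] [NumberField F]
    (u : InfinitePlace F → ℝ) : ℝ :=
  ∏ w : InfinitePlace F, (u w) ^ w.mult

/-- `I` is 1-reduced: `1` is primitive in `I` and there is a family `u` of positive reals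
indexed by the infinite places such that `1` is a shortest nonzero vector of `I` for `‖·‖_u`. -/
def IsOneReducedInf {F : Type*} [Field F] [NumberField F]
    (I : FractionalIdeal (𝓞 F)⁰ F) : Prop :=
  IsOnePrimitive I ∧ ∃ u : InfinitePlace F → ℝ, (∀ w, 0 < u w) ∧
    ∀ g ∈ I, g ≠ 0 → normUInf u 1 ≤ normUInf u g

theorem normU_mul_aux {F : Type*} [Field F] [NumberField F]
    (u : InfinitePlace F → ℝ) (f h : F) :
    normUInf (fun w => u w * w f) h = normUInf u (f * h) := by
  unfold normUInf
  congr 1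
  apply Finset.sum_congr rfl
  intro w _
  rw [map_mul]
  ring

theorem natCast_place_aux {F : Type*} [Field F] [NumberField F] (w : InfinitePlace F) (d : ℕ) :
    w (d : F) = d := by
  rw [← InfinitePlace.norm_embedding_eq, map_natCast]
  simp

theorem normU_pos_aux {F : Type*} [Field F] [NumberField F]
    (u : InfinitePlace F → ℝ) (hu : ∀ w, 0 < u w) (f : F) (hf : f ≠ 0) :
    0 < normUInf u f := by
  apply Real.sqrt_pos.mpr
  apply Finset.sum_pos
  · intro w _
    have h1 : (0:ℝ) < w.mult := by
      have := w.mult_pos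
      exact_mod_cast this
    have h2 : 0 < w f := InfinitePlace.pos_iff.mpr hf
    have h3 : 0 < u w := hu w
    positivity
  · exact Finset.univ_nonempty

theorem normU_div_nat_aux {F : Type*} [Field F] [NumberField F]
    (u : InfinitePlace F → ℝ) (f : F) (d : ℕ) (hd : 0 < d) :
    normUInf u (f * (d : F)⁻¹) = normUInf u f / d := by
  unfold normUInf
  have hd' : (0:ℝ) < (d:ℝ) := by exact_mod_cast hd
  rw [eq_div_iff (ne_of_gt hd'), ← Real.sqrt_sq hd'.le, ← Real.sqrt_mul (by positivity),
    Finset.sum_mul]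
  congr 1
  apply Finset.sum_congr rfl
  intro w _
  rw [map_mul, map_inv₀, natCast_place_aux]
  field_simp

/-- The reduction step (Remark 2.6): if `f` is a shortest nonzero vector of a nonzero fractional
ideal `I` with respect to the metric `u`, then `J = f⁻¹·I` is 1-reduced; indeed `1` is primitive
in `J` and, with `v_w = u_w·w(f)`, `1` is a shortest nonzero vector of `J` for `‖·‖_v`. -/
theorem reduction_gives_oneReduced {F : Type*} [Field F] [NumberField F]
    (I : FractionalIdeal (𝓞 F)⁰ F) (hI0 : I ≠ 0)
    (u : InfinitePlace F → ℝ) (hu : ∀ w, 0 < u w)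
    (f : F) (hfI : f ∈ I) (hf0 : f ≠ 0)
    (hshort : ∀ g ∈ I, g ≠ 0 → normUInf u f ≤ normUInf u g) :
    IsOneReducedInf (FractionalIdeal.spanSingleton (𝓞 F)⁰ f⁻¹ * I) ∧
      IsOnePrimitive (FractionalIdeal.spanSingleton (𝓞 F)⁰ f⁻¹ * I) ∧
      ∀ h ∈ FractionalIdeal.spanSingleton (𝓞 F)⁰ f⁻¹ * I, h ≠ 0 →
        normUInf (fun w => u w * w f) 1 ≤ normUInf (fun w => u w * w f) h := by
  have hmem : ∀ h : F, h ∈ FractionalIdeal.spanSingleton (𝓞 F)⁰ f⁻¹ * I ↔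
      ∃ g ∈ I, h = f⁻¹ * g := by
    intro h
    rw [FractionalIdeal.mem_singleton_mul]
  -- shortest vector claim
  have hshortv : ∀ h ∈ FractionalIdeal.spanSingleton (𝓞 F)⁰ f⁻¹ * I, h ≠ 0 →
      normUInf (fun w => u w * w f) 1 ≤ normUInf (fun w => u w * w f) h := by
    intro h hh hh0
    obtain ⟨g, hg, rfl⟩ := (hmem h).mp hh
    have hg0 : g ≠ 0 := by
      intro h0; apply hh0; rw [h0, mul_zero]
    rw [normU_mul_aux, normU_mul_aux, mul_one, ← mul_assoc,
      mul_inv_cancel₀ hf0, one_mul]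
    exact hshort g hg hg0
  -- primitivity
  have hprim : IsOnePrimitive (FractionalIdeal.spanSingleton (𝓞 F)⁰ f⁻¹ * I) := by
    constructor
    · exact (hmem 1).mpr ⟨f, hfI, (inv_mul_cancel₀ hf0).symm⟩
    · intro d hd hmemd
      obtain ⟨g, hg, he⟩ := (hmem _).mp hmemd
      have hgval : g = f * (d : F)⁻¹ := by
        field_simp at he ⊢
        linear_combination -he
      have hd0 : (0:ℕ) < d := by omega
      have hdF : ((d:F)) ≠ 0 := by
        exact_mod_cast Nat.cast_ne_zero.mpr (by omega)
      have hg0 : g ≠ 0 := by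
        rw [hgval]; exact mul_ne_zero hf0 (inv_ne_zero hdF)
      have hle := hshort g hg hg0
      rw [hgval, normU_div_nat_aux u f d hd0] at hle
      have hpos := normU_pos_aux u hu f hf0
      have hd2 : (2:ℝ) ≤ (d:ℝ) := by exact_mod_cast hd
      rw [le_div_iff₀ (by linarith)] at hle
      nlinarith
  exact ⟨⟨hprim, fun w => u w * w f, fun w => mul_pos (hu w) (InfinitePlace.pos_iff.mpr hf0),
    hshortv⟩, hprim, hshortv⟩
end

section
/- Let F be an imaginary quadratic field, i.e. a number field of degree 2 over ℚ with no real embeddings, with complex embedding σ : F → ℂ. Then every reduced fractional ideal of F is 1-reduced. -/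
open NumberField
open scoped nonZeroDivisors

section

variable {F : Type*} [Field F] (σ : F →+* ℂ)

lemma one_le_norm_of_forall_norm_lt_one_eq_zero {S : Set F}
    (hS : ∀ g ∈ S, ‖σ g‖ < 1 → g = 0) {g : F} (hg : g ∈ S) (hg0 : g ≠ 0) :
    1 ≤ ‖σ g‖ :=
  not_lt.mp fun hlt => hg0 (hS g hg hlt)

lemma natCast_inv_notMem_of_forall_norm_lt_one_eq_zero {S : Set F}
    (hS : ∀ g ∈ S, ‖σ g‖ < 1 → g = 0) {d : ℕ} (hd : 2 ≤ d) : ((d : F))⁻¹ ∉ S := by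
  intro hmem
  have hd1 : (1 : ℝ) < d := by exact_mod_cast hd
  have hnorm : ‖σ ((d : F))⁻¹‖ < 1 := by
    rw [map_inv₀, map_natCast, norm_inv, Complex.norm_natCast]
    exact inv_lt_one_of_one_lt₀ hd1
  have := σ.charZero
  have hd0 : (d : F) ≠ 0 := Nat.cast_ne_zero.mpr (by omega)
  exact inv_ne_zero hd0 (hS _ hmem hnorm)

end

theorem imaginary_quadratic_reduced_is_oneReduced_general {F : Type*} [Field F] [NumberField F]
    (σ : F →+* ℂ)
    (I : FractionalIdeal (𝓞 F)⁰ F)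
    (hred : (1 : F) ∈ I ∧ ∀ g ∈ I, ‖σ g‖ < 1 → g = 0) :
    IsOnePrimitive I ∧ ∃ u : ℝ, 0 < u ∧ ∀ g ∈ I, g ≠ 0 →
      Real.sqrt (2 * u ^ 2 * ‖σ 1‖ ^ 2) ≤
        Real.sqrt (2 * u ^ 2 * ‖σ g‖ ^ 2) := by
  obtain ⟨h1, hmin⟩ := hred
  refine ⟨⟨h1, fun d hd => natCast_inv_notMem_of_forall_norm_lt_one_eq_zero σ hmin hd⟩,
    1, one_pos, fun g hg hg0 => ?_⟩
  have hg1 := one_le_norm_of_forall_norm_lt_one_eq_zero σ hmin hg hg0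
  rw [map_one, norm_one]
  gcongr

/-- In an imaginary quadratic field `F` (degree 2 over `ℚ`, no real embeddings) with complex
embedding `σ`, every reduced fractional ideal is 1-reduced: `1` is primitive in `I` and there
is `u > 0` with `‖1‖_u ≤ ‖g‖_u` for every nonzero `g ∈ I`, where `‖g‖_u² = 2u²|σ g|²`. -/
theorem imaginary_quadratic_reduced_is_oneReduced {F : Type*} [Field F] [NumberField F]
    (hdeg : Module.finrank ℚ F = 2) (hreal : IsEmpty (F →+* ℝ))
    (σ : F →+* ℂ)
    (I : FractionalIdeal (𝓞 F)⁰ F)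
    (hred : (1 : F) ∈ I ∧ ∀ g ∈ I, ‖σ g‖ < 1 → g = 0) :
    IsOnePrimitive I ∧ ∃ u : ℝ, 0 < u ∧ ∀ g ∈ I, g ≠ 0 →
      Real.sqrt (2 * u ^ 2 * ‖σ 1‖ ^ 2) ≤
        Real.sqrt (2 * u ^ 2 * ‖σ g‖ ^ 2) :=
  imaginary_quadratic_reduced_is_oneReduced_general σ I hred
end

section
/- Let F be the real quadratic field of discriminant Δ_F = 12 (i.e. F = ℚ(√3)) with real embeddings σ, σ', and let f ∈ F be the element with σ(f) = (1 + √3)/2 and σ'(f) = (1 − √3)/2. Then I = ℤ·1 + ℤ·f is a fractional ideal of F, I is 1-reduced, N(f − 1/2) = −3/4, and the absolute norm of I⁻¹ equals 2 = √(Δ_F/3). -/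
/-! Put `s = 2f - 1`, so that `σ s = √3`: then `s² = 3`, `s ∉ ℚ`, and `F = ℚ ⊕ ℚs`.
If `a + bs` (`a, b ∈ ℚ`) is integral, its minimal polynomial `X² - 2aX + (a² - 3b²)` has integer
coefficients, and a computation mod 4 gives `a, b ∈ ℤ`; so `𝓞_F = ℤ[s]` and
`𝓞_F + 𝓞_F f = ℤ + ℤf`. From `f² = f + 1/2` and `2f ∈ 𝓞_F` the square of this ideal is `(1/2)`,
whence its norm is `1/2`. For `u = (1, 1)`, `‖m + nf‖² = ((2m + n)² + 3n²)/2 ≥ 2 = ‖1‖²` on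
nonzero elements, and this minimality already makes `1` primitive, since `‖1/d‖ = ‖1‖/d`. -/

open NumberField
open scoped nonZeroDivisors

open Polynomial

theorem Int.even_and_even_of_sq_sub_three_mul_sq_eq {p q c : ℤ} (h : p ^ 2 - 3 * q ^ 2 = 4 * c) :
    Even p ∧ Even q := by
  have sq_emod_four (x : ℤ) : Even x ∧ x ^ 2 % 4 = 0 ∨ x ^ 2 % 4 = 1 := by
    rcases Int.even_or_odd x with ⟨k, rfl⟩ | hx
    · exact Or.inl ⟨⟨k, rfl⟩, by ring_nf; omega⟩
    · exact Or.inr (Int.sq_mod_four_eq_one_of_odd hx)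
  rcases sq_emod_four p with ⟨hp, _⟩ | _ <;> rcases sq_emod_four q with ⟨hq, _⟩ | _
  · exact ⟨hp, hq⟩
  all_goals omega

theorem Rat.exists_intCast_eq_of_sq_eq_intCast {q : ℚ} {N : ℤ} (h : q ^ 2 = N) :
    ∃ m : ℤ, (m : ℚ) = q :=
  IsIntegrallyClosed.isIntegral_iff.mp <| .of_pow two_pos <| h ▸ isIntegral_algebraMap (x := N)

theorem Rat.exists_intCast_eq_of_two_mul_of_sq_sub_three_mul_sq {a b : ℚ} {p c : ℤ}
    (hp : (p : ℚ) = 2 * a) (hc : (c : ℚ) = a ^ 2 - 3 * b ^ 2) :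
    (∃ m : ℤ, (m : ℚ) = a) ∧ ∃ n : ℤ, (n : ℚ) = b := by
  -- `6b` is a rational with integral square, hence an integer, and `3 ∣ 6b` gives `2b ∈ ℤ`.
  have h36 : (6 * b) ^ 2 = ((3 * (p ^ 2 - 4 * c) : ℤ) : ℚ) := by
    push_cast; linear_combination -(3 * (p : ℚ) + 6 * a) * hp + 12 * hc
  obtain ⟨k, hk⟩ := exists_intCast_eq_of_sq_eq_intCast h36
  obtain ⟨q, rfl⟩ : (3 : ℤ) ∣ k := by
    refine Int.prime_three.dvd_of_dvd_pow (n := 2) ⟨p ^ 2 - 4 * c, ?_⟩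
    exact_mod_cast hk ▸ h36
  have hq : (q : ℚ) = 2 * b := by push_cast at hk; linarith
  have hpq : p ^ 2 - 3 * q ^ 2 = 4 * c := by
    have : (p : ℚ) ^ 2 - 3 * q ^ 2 = 4 * c := by
      linear_combination ((p : ℚ) + 2 * a) * hp - 3 * ((q : ℚ) + 2 * b) * hq - 4 * hc
    exact_mod_cast this
  obtain ⟨⟨a', rfl⟩, ⟨b', rfl⟩⟩ := Int.even_and_even_of_sq_sub_three_mul_sq_eq hpq
  push_cast at hp hq
  exact ⟨⟨a', by linarith⟩, ⟨b', by linarith⟩⟩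

theorem Int.four_le_sq_add_three_mul_sq {m n : ℤ} (h : m ≠ 0 ∨ n ≠ 0) :
    4 ≤ (2 * m + n) ^ 2 + 3 * n ^ 2 := by
  have one_le_sq {x : ℤ} (hx : x ≠ 0) : 1 ≤ x ^ 2 :=
    (one_le_sq_iff_one_le_abs x).mpr (Int.one_le_abs hx)
  rcases eq_or_ne (2 * m + n) 0 with h0 | h0
  · nlinarith [one_le_sq (show m ≠ 0 by omega)]
  · rcases eq_or_ne n 0 with rfl | hn
    · nlinarith [one_le_sq (show m ≠ 0 by omega)]
    · nlinarith [one_le_sq h0, one_le_sq hn]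

section SqrtThree

variable {F : Type*} [Field F] [CharZero F] {s : F}

theorem minpoly_ratCast_add_ratCast_mul (hs : s ^ 2 = 3) (hsQ : s ∉ (algebraMap ℚ F).range)
    {a b : ℚ} (hb : b ≠ 0) :
    minpoly ℚ ((a : F) + b * s) = X ^ 2 - C (2 * a) * X + C (a ^ 2 - 3 * b ^ 2) := by
  set x : F := a + b * s
  have hmonic : (X ^ 2 - C (2 * a) * X + C (a ^ 2 - 3 * b ^ 2)).Monic := by monicity!
  have hroot : aeval x (X ^ 2 - C (2 * a) * X + C (a ^ 2 - 3 * b ^ 2)) = 0 := by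
    simp only [map_add, map_sub, map_mul, map_pow, aeval_X, aeval_C, eq_ratCast, x]
    push_cast
    linear_combination (b : F) ^ 2 * hs
  have hxQ : x ∉ (algebraMap ℚ F).range := by
    rintro ⟨q, hq⟩
    refine hsQ ⟨(q - a) / b, ?_⟩
    rw [eq_ratCast] at hq ⊢
    push_cast
    rw [hq]
    field_simp
    ring
  have hx : IsIntegral ℚ x := ⟨_, hmonic, hroot⟩
  refine (eq_of_monic_of_dvd_of_natDegree_le (minpoly.monic hx) hmonic
    (minpoly.dvd ℚ x hroot) ?_).symm
  rw [← minpoly.two_le_natDegree_iff hx] at hxQ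
  have : (X ^ 2 - C (2 * a) * X + C (a ^ 2 - 3 * b ^ 2)).natDegree = 2 := by compute_degree!
  omega

theorem exists_intCast_eq_of_isIntegral_ratCast_add_ratCast_mul (hs : s ^ 2 = 3)
    (hsQ : s ∉ (algebraMap ℚ F).range) {a b : ℚ} (h : IsIntegral ℤ ((a : F) + b * s)) :
    (∃ m : ℤ, (m : ℚ) = a) ∧ ∃ n : ℤ, (n : ℚ) = b := by
  rcases eq_or_ne b 0 with rfl | hb
  · refine ⟨IsIntegrallyClosed.isIntegral_iff.mp ?_, 0, Int.cast_zero⟩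
    refine IsIntegral.tower_bot (algebraMap ℚ F).injective ?_
    simpa using h
  · set P := minpoly ℤ ((a : F) + b * s)
    have hmin : X ^ 2 - C (2 * a) * X + C (a ^ 2 - 3 * b ^ 2) = P.map (algebraMap ℤ ℚ) := by
      rw [← minpoly_ratCast_add_ratCast_mul hs hsQ hb]
      exact minpoly.isIntegrallyClosed_eq_field_fractions' ℚ h
    have h1 := congrArg (coeff · 1) hmin
    have h0 := congrArg (coeff · 0) hmin
    simp only [coeff_add, coeff_sub, coeff_X_pow, coeff_C_mul, coeff_X, coeff_C, coeff_map,
      eq_intCast] at h1 h0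
    norm_num at h1 h0
    exact Rat.exists_intCast_eq_of_two_mul_of_sq_sub_three_mul_sq (p := -P.coeff 1)
      (by push_cast; linarith) h0.symm

theorem exists_ratCast_add_ratCast_mul (hdeg : Module.finrank ℚ F = 2)
    (hsQ : s ∉ (algebraMap ℚ F).range) (x : F) : ∃ a b : ℚ, x = a + b * s := by
  have hli : LinearIndependent ℚ ![1, s] := by
    refine LinearIndependent.pair_iff' one_ne_zero |>.mpr fun q hq ↦ hsQ ⟨q, ?_⟩
    rwa [Algebra.smul_def, mul_one] at hq
  have hx : x ∈ Submodule.span ℚ {1, s} := by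
    rw [← Matrix.range_cons_cons_empty, hli.span_eq_top_of_card_eq_finrank (by simp [hdeg])]
    trivial
  obtain ⟨a, b, hab⟩ := Submodule.mem_span_pair.mp hx
  exact ⟨a, b, by rw [← hab, Rat.smul_def, Rat.smul_def, mul_one]⟩

end SqrtThree

theorem NumberField.RingOfIntegers.exists_intCast_add_intCast_mul {F : Type*} [Field F]
    [NumberField F] {s : F} (hdeg : Module.finrank ℚ F = 2) (hs : s ^ 2 = 3)
    (hsQ : s ∉ (algebraMap ℚ F).range) (α : 𝓞 F) : ∃ m n : ℤ, (α : F) = m + n * s := by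
  obtain ⟨a, b, hab⟩ := exists_ratCast_add_ratCast_mul hdeg hsQ (α : F)
  obtain ⟨⟨m, rfl⟩, ⟨n, rfl⟩⟩ := exists_intCast_eq_of_isIntegral_ratCast_add_ratCast_mul hs hsQ
    (by rw [← hab]; exact α.isIntegral_coe)
  exact ⟨m, n, by rw [hab]; push_cast; rfl⟩

section normU

variable {F : Type*} [Field F] {σ σ' : F →+* ℝ} {u₁ u₂ : ℝ}

theorem normU_inv_natCast (d : ℕ) :
    normU σ σ' u₁ u₂ (d : F)⁻¹ = (d : ℝ)⁻¹ * normU σ σ' u₁ u₂ 1 := by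
  simp only [normU, map_inv₀, map_natCast, map_one, one_pow, mul_one]
  conv_rhs => rw [← Real.sqrt_sq (inv_nonneg.2 d.cast_nonneg), ← Real.sqrt_mul (sq_nonneg _)]
  ring_nf

theorem isOneReduced_of_forall_normU_one_le [NumberField F] {I : FractionalIdeal (𝓞 F)⁰ F}
    (h1 : (1 : F) ∈ I) (hu₁ : 0 < u₁) (hu₂ : 0 < u₂)
    (hmin : ∀ g ∈ I, g ≠ 0 → normU σ σ' u₁ u₂ 1 ≤ normU σ σ' u₁ u₂ g) :
    IsOneReduced σ σ' I := by
  refine ⟨⟨h1, fun d hd hdI ↦ ?_⟩, u₁, u₂, hu₁, hu₂, hmin⟩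
  have hle := hmin _ hdI (inv_ne_zero (Nat.cast_ne_zero.2 (by omega)))
  have hpos : 0 < normU σ σ' u₁ u₂ 1 :=
    Real.sqrt_pos.2 (by simp only [map_one, one_pow, mul_one]; positivity)
  have hd : (d : ℝ)⁻¹ < 1 := inv_lt_one_of_one_lt₀ (by exact_mod_cast hd)
  rw [normU_inv_natCast] at hle
  exact hle.not_gt (mul_lt_of_lt_one_left hpos hd)

end normU

namespace FractionalIdeal

variable {R P : Type*} [CommRing R] [CommRing P] [Algebra R P] (S : Submonoid R)
  [IsLocalization S P]

noncomputable def spanPair (x y : P) : FractionalIdeal S P :=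
  ⟨Submodule.span R {x, y}, isFractional_of_fg (Submodule.fg_span (Set.toFinite _))⟩

theorem coe_spanPair (x y : P) : (spanPair S x y : Submodule R P) = Submodule.span R {x, y} :=
  rfl

theorem absNorm_eq_abs_of_mul_self_eq_spanSingleton {K : Type*} [Field K] [NumberField K]
    (hdeg : Module.finrank ℚ K = 2) {I : FractionalIdeal (𝓞 K)⁰ K} {q : ℚ}
    (h : I * I = spanSingleton _ (q : K)) : absNorm I = |q| := by
  refine (sq_eq_sq₀ (absNorm_nonneg I) (abs_nonneg q)).mp ?_
  rw [sq, ← map_mul, h, absNorm_span_singleton, ← eq_ratCast (algebraMap ℚ K),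
    Algebra.norm_algebraMap, hdeg, abs_pow]

end FractionalIdeal

open FractionalIdeal

section HalfOnePlusSqrtThree

theorem isIntegral_two_mul_of_sq_two_mul_sub_one_eq_three {A : Type*} [CommRing A] {f : A}
    (hf : (2 * f - 1) ^ 2 = 3) : IsIntegral ℤ (2 * f) := by
  have hs : IsIntegral ℤ (2 * f - 1) := .of_pow two_pos (hf ▸ isIntegral_natCast 3)
  simpa using hs.add isIntegral_one

variable {F : Type*} [Field F] [NumberField F] {f : F}

theorem mem_spanPair_one_iff (hdeg : Module.finrank ℚ F = 2) (hf : (2 * f - 1) ^ 2 = 3)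
    (hfQ : 2 * f - 1 ∉ (algebraMap ℚ F).range) {x : F} :
    x ∈ spanPair (𝓞 F)⁰ 1 f ↔ ∃ m n : ℤ, x = m + n * f := by
  rw [← mem_coe, coe_spanPair, Submodule.mem_span_pair]
  simp only [Algebra.smul_def, mul_one]
  constructor
  · rintro ⟨α, β, rfl⟩
    obtain ⟨a, b, ha⟩ := RingOfIntegers.exists_intCast_add_intCast_mul hdeg hf hfQ α
    obtain ⟨c, d, hc⟩ := RingOfIntegers.exists_intCast_add_intCast_mul hdeg hf hfQ β
    refine ⟨a - b + d, 2 * b + c + d, ?_⟩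
    rw [← RingOfIntegers.coe_eq_algebraMap, ← RingOfIntegers.coe_eq_algebraMap, ha, hc]
    push_cast
    linear_combination (d : F) / 2 * hf
  · rintro ⟨m, n, rfl⟩
    exact ⟨m, n, by simp⟩

theorem spanPair_one_mul_self (hf : (2 * f - 1) ^ 2 = 3) :
    spanPair (𝓞 F)⁰ 1 f * spanPair (𝓞 F)⁰ 1 f = spanSingleton (𝓞 F)⁰ (1 / 2 : F) := by
  have hf2 : f * f = f + 1 / 2 := by linear_combination hf / 4
  let t : 𝓞 F := ⟨2 * f, isIntegral_two_mul_of_sq_two_mul_sub_one_eq_three hf⟩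
  have ht : algebraMap (𝓞 F) F t = 2 * f := rfl
  have mem_of_two_mul_eq {x : F} (α : 𝓞 F) (hα : algebraMap (𝓞 F) F α = 2 * x) :
      x ∈ Submodule.span (𝓞 F) {(1 / 2 : F)} :=
    Submodule.mem_span_singleton.mpr ⟨α, by rw [Algebra.smul_def, hα]; ring⟩
  rw [← coeToSubmodule_inj, FractionalIdeal.coe_mul, coe_spanSingleton, coe_spanPair,
    Submodule.span_mul_span]
  refine le_antisymm (Submodule.span_le.mpr ?_) ?_
  · rintro _ ⟨x, hx, y, hy, rfl⟩
    simp only [Set.mem_insert_iff, Set.mem_singleton_iff] at hx hy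
    rcases hx with rfl | rfl <;> rcases hy with rfl | rfl <;> dsimp only
    · exact mem_of_two_mul_eq 2 (by rw [map_ofNat]; ring)
    · exact mem_of_two_mul_eq t (by rw [ht, one_mul])
    · exact mem_of_two_mul_eq t (by rw [ht, mul_one])
    · exact mem_of_two_mul_eq (t + 1) (by rw [map_add, map_one, ht, hf2]; ring)
  · rw [Submodule.span_le, Set.singleton_subset_iff, SetLike.mem_coe,
      show (1 / 2 : F) = f * f - 1 * f by rw [hf2]; ring]
    exact sub_mem (Submodule.subset_span ⟨f, by simp, f, by simp, rfl⟩)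
      (Submodule.subset_span ⟨1, by simp, f, by simp, rfl⟩)

end HalfOnePlusSqrtThree

section Embeddings

variable {F : Type*} [Field F]

theorem sq_eq_three_of_map_eq_sqrt_three (τ : F →+* ℝ) {s : F} (h : τ s = √3) : s ^ 2 = 3 :=
  τ.injective <| by rw [map_pow, h, map_ofNat, Real.sq_sqrt zero_le_three]

theorem notMem_range_algebraMap_of_map_eq_sqrt_three [CharZero F] (τ : F →+* ℝ) {s : F}
    (h : τ s = √3) : s ∉ (algebraMap ℚ F).range := by
  rintro ⟨q, rfl⟩
  have hirr : Irrational √3 := by simpa using Nat.prime_three.irrational_sqrt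
  exact hirr.ne_rat q (by rw [← h, eq_ratCast, map_ratCast])

variable {f : F}

theorem map_intCast_add_intCast_mul (τ : F →+* ℝ) {r : ℝ} (hτ : τ f = (1 + r) / 2) (m n : ℤ) :
    τ (m + n * f) = (2 * m + n + n * r) / 2 := by
  rw [map_add, map_mul, map_intCast, map_intCast, hτ]
  ring

theorem normU_one_one_intCast_add_intCast_mul {σ σ' : F →+* ℝ} (hσf : σ f = (1 + √3) / 2)
    (hσ'f : σ' f = (1 - √3) / 2) (m n : ℤ) :
    normU σ σ' 1 1 (m + n * f) = √(((2 * m + n) ^ 2 + 3 * n ^ 2) / 2) := by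
  rw [normU, map_intCast_add_intCast_mul σ hσf,
    map_intCast_add_intCast_mul σ' (r := -√3) (by rw [hσ'f, sub_eq_add_neg])]
  congr 1
  linear_combination (n : ℝ) ^ 2 / 2 * Real.sq_sqrt zero_le_three

theorem isOneReduced_of_forall_mem_iff [NumberField F] {σ σ' : F →+* ℝ}
    (hσf : σ f = (1 + √3) / 2) (hσ'f : σ' f = (1 - √3) / 2) {I : FractionalIdeal (𝓞 F)⁰ F}
    (hI : ∀ x, x ∈ I ↔ ∃ m n : ℤ, x = m + n * f) : IsOneReduced σ σ' I := by
  have hnormU := normU_one_one_intCast_add_intCast_mul hσf hσ'f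
  refine isOneReduced_of_forall_normU_one_le ((hI 1).mpr ⟨1, 0, by simp⟩) one_pos one_pos ?_
  rintro g hg hg0
  obtain ⟨m, n, rfl⟩ := (hI g).mp hg
  have hmn : m ≠ 0 ∨ n ≠ 0 := by contrapose! hg0; simp [hg0]
  have h4 : (4 : ℝ) ≤ (2 * m + n) ^ 2 + 3 * n ^ 2 := by
    exact_mod_cast Int.four_le_sq_add_three_mul_sq hmn
  rw [show (1 : F) = (1 : ℤ) + (0 : ℤ) * f by simp, hnormU, hnormU]
  refine Real.sqrt_le_sqrt ?_
  push_cast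
  linarith

end Embeddings

theorem example_disc_twelve_general {F : Type*} [Field F] [NumberField F]
    (hdeg : Module.finrank ℚ F = 2)
    (σ σ' : F →+* ℝ)
    (hΔ : discr F = 12)
    (f : F) (hσf : σ f = (1 + Real.sqrt 3) / 2) (hσ'f : σ' f = (1 - Real.sqrt 3) / 2) :
    ∃ I : FractionalIdeal (𝓞 F)⁰ F,
      (∀ x : F, x ∈ I ↔ ∃ m n : ℤ, x = (m : F) + (n : F) * f) ∧
      IsOneReduced σ σ' I ∧
      σ (f - 1/2) * σ' (f - 1/2) = -3/4 ∧
      (FractionalIdeal.absNorm I⁻¹ : ℝ) = 2 ∧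
      Real.sqrt ((discr F : ℝ) / 3) = 2 := by
  have hσs : σ (2 * f - 1) = √3 := by rw [map_sub, map_mul, map_ofNat, map_one, hσf]; ring
  have hf := sq_eq_three_of_map_eq_sqrt_three σ hσs
  have hmem (x : F) := mem_spanPair_one_iff hdeg hf
    (notMem_range_algebraMap_of_map_eq_sqrt_three σ hσs) (x := x)
  have hnorm : absNorm (spanPair (𝓞 F)⁰ 1 f) = 1 / 2 := by
    rw [absNorm_eq_abs_of_mul_self_eq_spanSingleton hdeg (q := 1 / 2)
      (by rw [spanPair_one_mul_self hf]; push_cast; rfl)]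
    norm_num
  refine ⟨spanPair (𝓞 F)⁰ 1 f, hmem, isOneReduced_of_forall_mem_iff hσf hσ'f hmem, ?_, ?_, ?_⟩
  · simp only [map_sub, map_div₀, map_one, map_ofNat, hσf, hσ'f]
    linear_combination -Real.sq_sqrt zero_le_three / 4
  · rw [map_inv₀, hnorm]
    norm_num
  · rw [hΔ, show ((12 : ℤ) : ℝ) / 3 = 2 ^ 2 by norm_num, Real.sqrt_sq zero_le_two]

/-- The example `F = ℚ(√3)` (discriminant 12): for `f` with `σ f = (1+√3)/2` and
`σ' f = (1-√3)/2`, the module `ℤ + ℤf` is a fractional ideal `I` of `F`, it is 1-reduced,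
`N(f - 1/2) = -3/4`, and `N(I⁻¹) = 2 = √(Δ_F/3)`. -/
theorem example_disc_twelve {F : Type*} [Field F] [NumberField F]
    (hdeg : Module.finrank ℚ F = 2)
    (σ σ' : F →+* ℝ) (hσ : σ ≠ σ')
    (hΔ : discr F = 12)
    (f : F) (hσf : σ f = (1 + Real.sqrt 3) / 2) (hσ'f : σ' f = (1 - Real.sqrt 3) / 2) :
    ∃ I : FractionalIdeal (𝓞 F)⁰ F,
      (∀ x : F, x ∈ I ↔ ∃ m n : ℤ, x = (m : F) + (n : F) * f) ∧
      IsOneReduced σ σ' I ∧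
      σ (f - 1/2) * σ' (f - 1/2) = -3/4 ∧
      (FractionalIdeal.absNorm I⁻¹ : ℝ) = 2 ∧
      Real.sqrt ((discr F : ℝ) / 3) = 2 :=
  example_disc_twelve_general hdeg σ σ' hΔ f hσf hσ'f
end

section
/- Let F be the real quadratic field of discriminant Δ_F = 2044 (i.e. F = ℚ(√511)) with real embeddings σ, σ', and let f ∈ F be the element with σ(f) = (19 + √511)/25 and σ'(f) = (19 − √511)/25. Then I = ℤ·1 + ℤ·f is a fractional ideal of F, I is 1-reduced, and N(f − 1/2) = −3/4. -/
open NumberField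
open scoped nonZeroDivisors

open Polynomial

lemma irr511 : Irrational (Real.sqrt 511) := by
  rw [show ((511:ℝ) = ((511:ℕ):ℝ)) by norm_num, irrational_sqrt_natCast_iff]
  rintro ⟨r, hr⟩
  have h0 : 0 ≤ r := by nlinarith
  have h2 : r ≤ 23 := by nlinarith
  interval_cases r <;> omega

lemma O_struct {F : Type*} [Field F] [NumberField F]
    (hdeg : Module.finrank ℚ F = 2) (σ : F →+* ℝ) (ω : F)
    (hσω : σ ω = Real.sqrt 511) (hω2 : ω^2 = 511) (r : 𝓞 F) :
    ∃ a b : ℤ, (algebraMap (𝓞 F) F r) = a + b * ω := by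
  have hirr : Irrational (σ ω) := hσω ▸ irr511
  have hli : LinearIndependent ℚ ![1, ω] := by
    rw [LinearIndependent.pair_iff]
    intro a b hab
    rw [Rat.smul_def, Rat.smul_def, mul_one] at hab
    have h := congrArg σ hab
    rw [map_add, map_mul, map_ratCast, map_ratCast, map_zero] at h
    rcases eq_or_ne b 0 with rfl | hb
    · refine ⟨by exact_mod_cast (by simpa using h), rfl⟩
    · exfalso
      apply hirr
      refine ⟨-a/b, ?_⟩
      have hb' : (b:ℝ) ≠ 0 := by exact_mod_cast hb
      push_cast
      field_simp
      linarith
  let B := basisOfLinearIndependentOfCardEqFinrank hli (by simp [hdeg])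
  have hB : ⇑B = ![1, ω] := coe_basisOfLinearIndependentOfCardEqFinrank hli _
  set x : F := algebraMap (𝓞 F) F r with hxdef
  set a : ℚ := B.repr x 0 with hadef
  set b : ℚ := B.repr x 1 with hbdef
  have hx : x = (a : F) + (b : F) * ω := by
    have h := B.sum_repr x
    rw [Fin.sum_univ_two] at h
    rw [show B 0 = 1 by rw [hB]; rfl, show B 1 = ω by rw [hB]; rfl] at h
    rw [Rat.smul_def, Rat.smul_def, mul_one] at h
    exact h.symm
  have hint : IsIntegral ℤ x := r.isIntegral_coe
  by_cases hb : b = 0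
  · have hxa : x = algebraMap ℚ F a := by rw [hx, hb, eq_ratCast (algebraMap ℚ F) a]; push_cast; ring
    have hia : IsIntegral ℤ a := by
      rw [← isIntegral_algebraMap_iff (algebraMap ℚ F).injective]
      rwa [← hxa]
    obtain ⟨z, hz⟩ := IsIntegrallyClosed.isIntegral_iff.mp hia
    have hz' : (z:ℚ) = a := by rw [← hz]; simp
    refine ⟨z, 0, ?_⟩
    rw [hx, hb, ← hz']
    push_cast
    ring
  · set p : ℚ[X] := X^2 - C (2*a) * X + C (a^2 - 511*b^2) with hpdef
    have hpdeg : p.natDegree = 2 := by unfold p; compute_degree!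
    have hpmonic : p.Monic := by
      apply Polynomial.monic_of_natDegree_le_of_coeff_eq_one 2 (le_of_eq hpdeg)
      unfold p
      simp only [coeff_add, coeff_sub, coeff_X_pow, coeff_C_mul, coeff_X, coeff_C]
      norm_num
    have hroot : Polynomial.aeval x p = 0 := by
      unfold p
      simp only [map_add, map_sub, map_pow, map_mul, aeval_X, aeval_C, eq_ratCast]
      push_cast
      linear_combination (x - (a:F) + (b:F)*ω) * hx + (b:F)^2 * hω2
    have hQint : IsIntegral ℚ x := IsIntegral.of_finite ℚ x
    have hnotrange : x ∉ (algebraMap ℚ F).range := by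
      rintro ⟨q, hq⟩
      rw [eq_ratCast (algebraMap ℚ F)] at hq
      apply hirr
      refine ⟨(q - a)/b, ?_⟩
      have hb' : ((b:ℚ):F) ≠ 0 := by exact_mod_cast hb
      have hω' : ω = (((q - a)/b : ℚ) : F) := by
        push_cast
        rw [eq_div_iff hb']
        push_cast
        linear_combination -hq - hx
      rw [hω', map_ratCast]
    have hdvd := minpoly.dvd ℚ x hroot
    have hge := (minpoly.two_le_natDegree_iff hQint).mpr hnotrange
    have hpeq : minpoly ℚ x = p :=
      (Polynomial.eq_of_monic_of_dvd_of_natDegree_le (minpoly.monic hQint) hpmonic hdvd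
        (by rw [hpdeg]; exact hge)).symm
    have hmap : minpoly ℚ x = (minpoly ℤ x).map (algebraMap ℤ ℚ) :=
      minpoly.isIntegrallyClosed_eq_field_fractions' ℚ hint
    set t : ℤ := -((minpoly ℤ x).coeff 1) with htdef
    set nn : ℤ := (minpoly ℤ x).coeff 0 with hnndef
    have hc1 : p.coeff 1 = -(2*a) := by
      unfold p
      simp only [coeff_add, coeff_sub, coeff_X_pow, coeff_C_mul, coeff_X, coeff_C]
      norm_num
    have hc0 : p.coeff 0 = a^2 - 511*b^2 := by
      unfold p
      simp only [coeff_add, coeff_sub, coeff_X_pow, coeff_C_mul, coeff_X, coeff_C]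
      norm_num
    have hco1 := congrArg (fun q => q.coeff 1) (hpeq.symm.trans hmap)
    have hco0 := congrArg (fun q => q.coeff 0) (hpeq.symm.trans hmap)
    simp only [Polynomial.coeff_map, eq_intCast, hc1] at hco1
    simp only [Polynomial.coeff_map, eq_intCast, hc0] at hco0
    have hta : (t:ℚ) = 2*a := by rw [htdef]; push_cast; linarith [hco1]
    have hna : (nn:ℚ) = a^2 - 511*b^2 := by rw [hnndef]; linarith [hco0]
    have hu : 511 * (2*b)^2 = (t:ℚ)^2 - 4*(nn:ℚ) := by
      rw [hta, hna]
      ring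
    set u : ℚ := 2*b with hudef
    have hupos : 0 < u.den := u.pos
    have hden : u.den = 1 := by
      have h2 : ((511 * u.num^2 : ℤ) : ℚ) = (((t^2 - 4*nn) * (u.den:ℤ)^2 : ℤ) : ℚ) := by
        push_cast
        rw [← hu]
        have hnum : (u.num : ℚ) = u * u.den := by
          have hden0 : ((u.den:ℚ)) ≠ 0 := by exact_mod_cast u.pos.ne'
          have h := Rat.num_div_den u
          rw [div_eq_iff hden0] at h
          exact h
        rw [hnum]; ring
      have h3 : (511 : ℤ) * u.num^2 = (t^2 - 4*nn) * (u.den:ℤ)^2 := by exact_mod_cast h2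
      have h4 : ((u.den:ℤ))^2 ∣ 511 * u.num^2 := ⟨t^2 - 4*nn, by linarith [h3]⟩
      have h4n : (u.den^2 : ℕ) ∣ (511 * u.num.natAbs^2 : ℕ) := by
        have := Int.natAbs_dvd_natAbs.mpr h4
        simpa [Int.natAbs_mul, Int.natAbs_pow] using this
      have hcop : Nat.Coprime u.num.natAbs u.den := u.reduced
      have hcop2 : Nat.Coprime (u.den^2) (u.num.natAbs^2) := (hcop.symm.pow 2 2)
      have h5 : u.den^2 ∣ 511 := (Nat.Coprime.dvd_of_dvd_mul_right hcop2 h4n)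
      have h6 : u.den^2 ≤ 511 := Nat.le_of_dvd (by norm_num) h5
      set d := u.den with hd
      have h7 : d ≤ 22 := by nlinarith
      interval_cases d <;> omega
    have hq2 : ((u.num : ℚ)) = u := (Rat.den_eq_one_iff u).mp hden
    set q2 : ℤ := u.num with hq2def
    have h3 : (511 : ℤ) * q2^2 = t^2 - 4*nn := by
      have h3x : ((511 * q2^2 : ℤ) : ℚ) = (t:ℚ)^2 - 4*(nn:ℚ) := by
        push_cast
        rw [hq2]
        exact hu
      exact_mod_cast h3x
    have hZ : t^2 - 511*q2^2 = 4*nn := by linarith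
    have key2 : (2:ℤ) ∣ t ∧ (2:ℤ) ∣ q2 := by
      rcases Int.even_or_odd t with ⟨k, hk⟩ | ⟨k, hk⟩ <;>
        rcases Int.even_or_odd q2 with ⟨l, hl⟩ | ⟨l, hl⟩
      · exact ⟨⟨k, by omega⟩, ⟨l, by omega⟩⟩
      · exfalso
        have e : 4*(k*k) - 511*(4*(l*l) + 4*l + 1) = 4*nn := by
          rw [← hZ, hk, hl]; ring
        generalize k*k = K at e
        generalize l*l = L at e
        omega
      · exfalso
        have e : (4*(k*k) + 4*k + 1) - 511*(4*(l*l)) = 4*nn := by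
          rw [← hZ, hk, hl]; ring
        generalize k*k = K at e
        generalize l*l = L at e
        omega
      · exfalso
        have e : (4*(k*k) + 4*k + 1) - 511*(4*(l*l) + 4*l + 1) = 4*nn := by
          rw [← hZ, hk, hl]; ring
        generalize k*k = K at e
        generalize l*l = L at e
        omega
    obtain ⟨a0, ha0⟩ := key2.1
    obtain ⟨b0, hb0⟩ := key2.2
    have haa : a = (a0:ℚ) := by
      have h1 : (t:ℚ) = 2*(a0:ℚ) := by exact_mod_cast congrArg (fun z : ℤ => (z:ℚ)) ha0
      rw [hta] at h1; linarith
    have hbb : b = (b0:ℚ) := by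
      have h1 : (q2:ℚ) = 2*(b0:ℚ) := by exact_mod_cast congrArg (fun z : ℤ => (z:ℚ)) hb0
      rw [hq2def, hq2, hudef] at h1; linarith
    refine ⟨a0, b0, ?_⟩
    rw [hx, haa, hbb]
    push_cast
    ring

lemma int_lemma (m n : ℤ) (h : ¬(m = 0 ∧ n = 0)) : 1 ≤ m^2 + m*n + n^2 := by
  rcases eq_or_ne n 0 with rfl | hn
  · simp only [not_and] at h
    have hm : m ≠ 0 := by tauto
    have := Int.one_le_abs (by simpa using hm)
    nlinarith [sq_abs m]
  · have := Int.one_le_abs hn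
    nlinarith [sq_nonneg (2*m+n), sq_abs n]


/-- The example `F = ℚ(√511)` (discriminant 2044): for `f` with `σ f = (19+√511)/25` and
`σ' f = (19-√511)/25`, the module `ℤ + ℤf` is a fractional ideal `I` of `F`, it is 1-reduced,
and `N(f - 1/2) = -3/4`. -/
theorem example_disc_2044 {F : Type*} [Field F] [NumberField F]
    (hdeg : Module.finrank ℚ F = 2)
    (σ σ' : F →+* ℝ) (hσ : σ ≠ σ')
    (hΔ : discr F = 2044)
    (f : F) (hσf : σ f = (19 + Real.sqrt 511) / 25) (hσ'f : σ' f = (19 - Real.sqrt 511) / 25) :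
    ∃ I : FractionalIdeal (𝓞 F)⁰ F,
      (∀ x : F, x ∈ I ↔ ∃ m n : ℤ, x = (m : F) + (n : F) * f) ∧
      IsOneReduced σ σ' I ∧
      σ (f - 1/2) * σ' (f - 1/2) = -3/4 := by
  set s := Real.sqrt 511 with hs
  have hs2 : s^2 = 511 := Real.sq_sqrt (by norm_num)
  have hs0 : 0 < s := Real.sqrt_pos.mpr (by norm_num)
  have h78 : 78 < 12*s := by nlinarith
  set ω : F := 25*f - 19 with hω
  have hσω : σ ω = s := by
    rw [hω, map_sub, map_mul, map_ofNat, map_ofNat, hσf]; ring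
  have hσ'ω : σ' ω = -s := by
    rw [hω, map_sub, map_mul, map_ofNat, map_ofNat, hσ'f]; ring
  have hω2 : ω^2 = 511 := by
    apply σ.injective
    rw [map_pow, hσω, map_ofNat]
    exact hs2
  have hf2 : 25*(f*f) = 38*f + 6 := by
    linear_combination (1/25)*hω2 - ((ω + 25*f - 19)/25)*hω
  have hωint : IsIntegral ℤ ω := by
    refine ⟨X^2 - C 511, monic_X_pow_sub_C _ two_ne_zero, ?_⟩
    rw [eval₂_sub, eval₂_pow, eval₂_X, eval₂_C, eq_intCast]
    push_cast
    linear_combination hω2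
  let ωO : 𝓞 F := ⟨ω, hωint⟩
  have hωO : algebraMap (𝓞 F) F ωO = ω := rfl
  have hO : ∀ r : 𝓞 F, ∃ a b : ℤ, algebraMap (𝓞 F) F r = a + b * ω :=
    fun r => O_struct hdeg σ ω hσω hω2 r
  have hfrac : IsFractional (𝓞 F)⁰ (Submodule.span (𝓞 F) ({1, f} : Set F)) := by
    rw [FractionalIdeal.isFractional_span_iff]
    refine ⟨25, mem_nonZeroDivisors_of_ne_zero (by norm_num), ?_⟩
    rintro b hb
    rcases Set.mem_insert_iff.mp hb with rfl | hb'
    · exact ⟨25, by simp [Algebra.smul_def]⟩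
    · rw [Set.mem_singleton_iff] at hb'
      subst hb'
      refine ⟨19 + ωO, ?_⟩
      rw [map_add, hωO, Algebra.smul_def,
        show (algebraMap (𝓞 F) F) 25 = 25 from map_ofNat _ 25,
        show (algebraMap (𝓞 F) F) 19 = 19 from map_ofNat _ 19]
      push_cast
      linear_combination hω
  let I : FractionalIdeal (𝓞 F)⁰ F := ⟨Submodule.span (𝓞 F) ({1, f} : Set F), hfrac⟩
  have hmem : ∀ x : F, x ∈ I ↔
      ∃ m n : ℤ, x = (m : F) + (n : F) * f := by
    intro x
    rw [← FractionalIdeal.mem_coe, FractionalIdeal.coe_mk, Submodule.mem_span_pair]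
    constructor
    · rintro ⟨r, sc, hrs⟩
      obtain ⟨a, b, hab⟩ := hO r
      obtain ⟨c, d, hcd⟩ := hO sc
      refine ⟨a - 19*b + 6*d, 25*b + c + 19*d, ?_⟩
      rw [← hrs, Algebra.smul_def, Algebra.smul_def, hab, hcd]
      push_cast
      linear_combination ((b:F) + (d:F)*f) * hω + (d:F) * hf2
    · rintro ⟨m, n, rfl⟩
      refine ⟨(m : 𝓞 F), (n : 𝓞 F), ?_⟩
      rw [Algebra.smul_def, Algebra.smul_def, map_intCast, map_intCast]
      ring
  refine ⟨I, hmem, ⟨⟨(hmem 1).mpr ⟨1, 0, by push_cast; ring⟩, ?_⟩, ?_⟩, ?_⟩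
  · -- primitivity
    intro d hd hin
    obtain ⟨m, n, h⟩ := (hmem _).mp hin
    have hσe : ((d:ℝ))⁻¹ = (m:ℝ) + (n:ℝ) * ((19+s)/25) := by
      have := congrArg σ h
      rwa [map_inv₀, map_natCast, map_add, map_mul, map_intCast, map_intCast, hσf] at this
    have hσ'e : ((d:ℝ))⁻¹ = (m:ℝ) + (n:ℝ) * ((19-s)/25) := by
      have := congrArg σ' h
      rwa [map_inv₀, map_natCast, map_add, map_mul, map_intCast, map_intCast, hσ'f] at this
    have h5 : (n:ℝ) * s = 0 := by linear_combination (-25/2)*hσe + (25/2)*hσ'e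
    have hn0 : (n:ℝ) = 0 := by
      rcases mul_eq_zero.mp h5 with h6 | h6
      · exact h6
      · exact absurd h6 hs0.ne'
    have hd0 : (0:ℝ) < ((d:ℝ))⁻¹ := by
      have : (0:ℝ) < (d:ℝ) := by exact_mod_cast Nat.lt_of_lt_of_le Nat.zero_lt_two hd
      positivity
    have hd1 : ((d:ℝ))⁻¹ < 1 := by
      apply inv_lt_one_of_one_lt₀
      exact_mod_cast Nat.lt_of_lt_of_le Nat.one_lt_two hd
    have hdm : ((d:ℝ))⁻¹ = (m:ℝ) := by rw [hσe, hn0]; ring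
    rw [hdm] at hd0 hd1
    have : (0:ℤ) < m ∧ m < 1 := by exact_mod_cast And.intro hd0 hd1
    omega
  · -- metric
    have ht0 : 0 < (78+12*s)/(12*s-78) := div_pos (by linarith) (by linarith)
    refine ⟨1, Real.sqrt ((78+12*s)/(12*s-78)), one_pos, Real.sqrt_pos.mpr ht0, ?_⟩
    intro g hg hg0
    obtain ⟨m, n, rfl⟩ := (hmem g).mp hg
    have hmn : ¬(m = 0 ∧ n = 0) := by
      rintro ⟨rfl, rfl⟩
      simp at hg0
    have hkey : (1:ℝ) ≤ (m:ℝ)^2 + (m:ℝ)*(n:ℝ) + (n:ℝ)^2 := by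
      exact_mod_cast int_lemma m n hmn
    have hσg : σ ((m:F) + (n:F) * f) = (m:ℝ) + (n:ℝ) * ((19+s)/25) := by
      rw [map_add, map_mul, map_intCast, map_intCast, hσf]
    have hσ'g : σ' ((m:F) + (n:F) * f) = (m:ℝ) + (n:ℝ) * ((19-s)/25) := by
      rw [map_add, map_mul, map_intCast, map_intCast, hσ'f]
    simp only [normU, map_one, hσg, hσ'g]
    apply Real.sqrt_le_sqrt
    rw [Real.sq_sqrt ht0.le]
    set A : ℝ := (m:ℝ) + (n:ℝ) * ((19+s)/25) with hA
    set B : ℝ := (m:ℝ) + (n:ℝ) * ((19-s)/25) with hB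
    set t0 : ℝ := (78+12*s)/(12*s-78) with ht0def
    have hkey2 : (A^2 - 1)*(12*s-78) + (78+12*s)*(B^2-1)
        = 24*s*(((m:ℝ)^2 + (m:ℝ)*(n:ℝ) + (n:ℝ)^2) - 1) := by
      rw [hA, hB]
      linear_combination (24*s*(n:ℝ)^2/625) * hs2
    have hfin : 0 ≤ 24*s*(((m:ℝ)^2 + (m:ℝ)*(n:ℝ) + (n:ℝ)^2) - 1) :=
      mul_nonneg (by positivity) (by linarith)
    have hpos : (0:ℝ) < 12*s - 78 := by linarith
    have h9 : 0 ≤ (A^2-1)*(12*s-78) + (78+12*s)*(B^2-1) := by rw [hkey2]; exact hfin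
    have hexp : t0*(12*s-78) = 78+12*s := div_mul_cancel₀ _ hpos.ne'
    have h10 : ((A^2-1) + t0*(B^2-1))*(12*s-78)
        = (A^2-1)*(12*s-78) + (78+12*s)*(B^2-1) := by
      linear_combination (B^2-1) * hexp
    have hfinal : 0 ≤ (A^2 - 1) + t0*(B^2-1) := by
      have h11 := h10.symm ▸ h9
      rw [mul_comm] at h11
      exact nonneg_of_mul_nonneg_right h11 hpos
    nlinarith [hfinal]
  · -- norm computation
    rw [map_sub, map_sub, map_div₀, map_div₀, map_one, map_one, map_ofNat, map_ofNat, hσf, hσ'f]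
    linear_combination (-(1:ℝ)/625) * hs2
end

section
/- Let Δ, a, b be real numbers with a > 0, 0 < b < √Δ ≤ 2a < b + √Δ, and (a − b)² + 3a² ≤ Δ. Then ((√Δ + b)·(4a − b − √Δ)) / ((√Δ − b)·(4a − b + √Δ)) ≤ ((2a + b + √Δ)·(b + √Δ − 2a)) / ((2a + b − √Δ)·(2a − b + √Δ)). Equivalently, the difference of the right-hand side minus the left-hand side equals 8a√Δ·(Δ − 3a² − (a − b)²) / ((√Δ − b)·(4a² − (√Δ − b)²)·(4a + √Δ − b)), which is non-negative under the stated hypotheses. -/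
/-!
With `s = √Δ`, the bound `s ≤ 2a < b + s` makes all four denominators positive, and clearing
them turns the difference of the two quotients into a polynomial identity in `a, b, s` once
`Δ` is written as `s²`. Its numerator `8as(s² - 3a² - (a - b)²)` is nonnegative by
`(a - b)² + 3a² ≤ Δ`.
-/

theorem quotient_sub_quotient_eq (a b s : ℝ) (hsb : s - b ≠ 0) (hsum : 4 * a - b + s ≠ 0)
    (hplus : 2 * a + b - s ≠ 0) (hminus : 2 * a - b + s ≠ 0) :
    ((2 * a + b + s) * (b + s - 2 * a)) / ((2 * a + b - s) * (2 * a - b + s)) -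
        ((s + b) * (4 * a - b - s)) / ((s - b) * (4 * a - b + s)) =
      8 * a * s * (s ^ 2 - 3 * a ^ 2 - (a - b) ^ 2) /
        ((s - b) * (4 * a ^ 2 - (s - b) ^ 2) * (4 * a + s - b)) := by
  have hdiff : 4 * a ^ 2 - (s - b) ^ 2 = (2 * a + b - s) * (2 * a - b + s) := by ring
  have hsum' : 4 * a + s - b = 4 * a - b + s := by ring
  rw [hdiff, hsum', div_sub_div _ _ (mul_ne_zero hplus hminus) (mul_ne_zero hsb hsum),
    div_eq_div_iff (by positivity) (by positivity)]
  ring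

theorem closed_form_nonneg (a b s d : ℝ) (hb : 0 < b) (hbs : b < s) (hs : s ≤ 2 * a)
    (hd : 0 ≤ d) :
    0 ≤ 8 * a * s * d / ((s - b) * (4 * a ^ 2 - (s - b) ^ 2) * (4 * a + s - b)) := by
  have hsb : 0 < s - b := sub_pos.2 hbs
  have hdiff : 0 < 4 * a ^ 2 - (s - b) ^ 2 := by nlinarith
  have hsum : 0 < 4 * a + s - b := by linarith
  have ha : 0 ≤ a := by linarith
  have hs0 : 0 ≤ s := by linarith
  positivity

theorem Bmin_le_Bf_general (Δ a b : ℝ)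
    (h1 : b < Real.sqrt Δ) (h2 : Real.sqrt Δ ≤ 2 * a) (h3 : 2 * a < b + Real.sqrt Δ)
    (h4 : (a - b) ^ 2 + 3 * a ^ 2 ≤ Δ) :
    ((Real.sqrt Δ + b) * (4 * a - b - Real.sqrt Δ)) /
        ((Real.sqrt Δ - b) * (4 * a - b + Real.sqrt Δ)) ≤
      ((2 * a + b + Real.sqrt Δ) * (b + Real.sqrt Δ - 2 * a)) /
        ((2 * a + b - Real.sqrt Δ) * (2 * a - b + Real.sqrt Δ)) ∧
    ((2 * a + b + Real.sqrt Δ) * (b + Real.sqrt Δ - 2 * a)) /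
        ((2 * a + b - Real.sqrt Δ) * (2 * a - b + Real.sqrt Δ)) -
      ((Real.sqrt Δ + b) * (4 * a - b - Real.sqrt Δ)) /
        ((Real.sqrt Δ - b) * (4 * a - b + Real.sqrt Δ)) =
      8 * a * Real.sqrt Δ * (Δ - 3 * a ^ 2 - (a - b) ^ 2) /
        ((Real.sqrt Δ - b) * (4 * a ^ 2 - (Real.sqrt Δ - b) ^ 2) * (4 * a + Real.sqrt Δ - b)) := by
  set s := Real.sqrt Δ
  have hb : 0 < b := by linarith
  have hs : s ^ 2 = Δ := Real.sq_sqrt (le_trans (by positivity) h4)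
  have key := quotient_sub_quotient_eq a b s (by linarith) (by linarith) (by linarith)
    (by linarith)
  rw [hs] at key
  refine ⟨sub_nonneg.1 ?_, key⟩
  exact key ▸ closed_form_nonneg a b s _ hb h1 h2 (by linarith)

/-- The key inequality of Case 2 of the proof of Theorem 1.1: `B_min⁴ ≤ B(Φ(f))⁴`, together
with the stated closed form of the difference. -/
theorem Bmin_le_Bf (Δ a b : ℝ) (ha : 0 < a) (hb : 0 < b)
    (h1 : b < Real.sqrt Δ) (h2 : Real.sqrt Δ ≤ 2 * a) (h3 : 2 * a < b + Real.sqrt Δ)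
    (h4 : (a - b) ^ 2 + 3 * a ^ 2 ≤ Δ) :
    ((Real.sqrt Δ + b) * (4 * a - b - Real.sqrt Δ)) /
        ((Real.sqrt Δ - b) * (4 * a - b + Real.sqrt Δ)) ≤
      ((2 * a + b + Real.sqrt Δ) * (b + Real.sqrt Δ - 2 * a)) /
        ((2 * a + b - Real.sqrt Δ) * (2 * a - b + Real.sqrt Δ)) ∧
    ((2 * a + b + Real.sqrt Δ) * (b + Real.sqrt Δ - 2 * a)) /
        ((2 * a + b - Real.sqrt Δ) * (2 * a - b + Real.sqrt Δ)) -
      ((Real.sqrt Δ + b) * (4 * a - b - Real.sqrt Δ)) /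
        ((Real.sqrt Δ - b) * (4 * a - b + Real.sqrt Δ)) =
      8 * a * Real.sqrt Δ * (Δ - 3 * a ^ 2 - (a - b) ^ 2) /
        ((Real.sqrt Δ - b) * (4 * a ^ 2 - (Real.sqrt Δ - b) ^ 2) * (4 * a + Real.sqrt Δ - b)) :=
  Bmin_le_Bf_general Δ a b h1 h2 h3 h4
end

section
/- Let Δ, a, b be real numbers with a > 0, 0 < b < √Δ, Δ/4 ≤ a² ≤ Δ/3 (so √Δ ≤ 2a and 3a² ≤ Δ), and 2a − √(4a² − Δ) ≤ b ≤ a + √(Δ − 3a²). Then each of the three quantities ((√Δ + b)·(4a − b − √Δ)) / ((√Δ − b)·(4a − b + √Δ)), ((√Δ + b − 2a)·(6a − b − √Δ)) / ((√Δ + 2a − b)·(6a + √Δ − b)), and ((b + √Δ − 2a)·(4a − b − √Δ)) / ((√Δ + 2a − b)·(4a + √Δ − b)) is less than or equal to ((2a + b + √Δ)·(b + √Δ − 2a)) / ((2a + b − √Δ)·(2a − b + √Δ)). -/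
/-- The key inequalities of Case 3 of the proof of Theorem 1.1: each of
`B(-Φ(f)+Φ(1))⁴`, `B(-Φ(f)+2Φ(1))⁴` and `B(-2Φ(f)+3Φ(1))⁴` is at most `B(Φ(f))⁴`. -/
theorem Bmin_le_Bmax_case3 (Δ a b : ℝ) (ha : 0 < a) (hb : 0 < b)
    (h1 : b < Real.sqrt Δ) (h2 : Δ / 4 ≤ a ^ 2) (h3 : a ^ 2 ≤ Δ / 3)
    (h4 : 2 * a - Real.sqrt (4 * a ^ 2 - Δ) ≤ b)
    (h5 : b ≤ a + Real.sqrt (Δ - 3 * a ^ 2)) :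
    ((Real.sqrt Δ + b) * (4 * a - b - Real.sqrt Δ)) /
        ((Real.sqrt Δ - b) * (4 * a - b + Real.sqrt Δ)) ≤
      ((2 * a + b + Real.sqrt Δ) * (b + Real.sqrt Δ - 2 * a)) /
        ((2 * a + b - Real.sqrt Δ) * (2 * a - b + Real.sqrt Δ)) ∧
    ((Real.sqrt Δ + b - 2 * a) * (6 * a - b - Real.sqrt Δ)) /
        ((Real.sqrt Δ + 2 * a - b) * (6 * a + Real.sqrt Δ - b)) ≤
      ((2 * a + b + Real.sqrt Δ) * (b + Real.sqrt Δ - 2 * a)) /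
        ((2 * a + b - Real.sqrt Δ) * (2 * a - b + Real.sqrt Δ)) ∧
    ((b + Real.sqrt Δ - 2 * a) * (4 * a - b - Real.sqrt Δ)) /
        ((Real.sqrt Δ + 2 * a - b) * (4 * a + Real.sqrt Δ - b)) ≤
      ((2 * a + b + Real.sqrt Δ) * (b + Real.sqrt Δ - 2 * a)) /
        ((2 * a + b - Real.sqrt Δ) * (2 * a - b + Real.sqrt Δ)) := by
  set s := Real.sqrt Δ with hs
  have hΔ : 0 < Δ := by nlinarith
  have hs2 : s ^ 2 = Δ := Real.sq_sqrt hΔ.le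
  have hs0 : 0 < s := Real.sqrt_pos.mpr hΔ
  have h3s : 3 * a ^ 2 ≤ s ^ 2 := by nlinarith
  have hsle : s ≤ 2 * a := by nlinarith
  have has : a < s := by nlinarith
  -- t = sqrt (4a² - Δ)
  set t := Real.sqrt (4 * a ^ 2 - Δ) with ht
  have ht0 : 0 ≤ t := Real.sqrt_nonneg _
  have ht2 : t ^ 2 = 4 * a ^ 2 - Δ := Real.sq_sqrt (by nlinarith)
  have hta : t ≤ a := by nlinarith
  have hab : a ≤ b := by linarith
  -- u = sqrt (Δ - 3a²)
  set u := Real.sqrt (Δ - 3 * a ^ 2) with hu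
  have hu0 : 0 ≤ u := Real.sqrt_nonneg _
  have hu2 : u ^ 2 = Δ - 3 * a ^ 2 := Real.sq_sqrt (by nlinarith)
  have hua : u ≤ a := by nlinarith
  have hb2a : b ≤ 2 * a := by linarith
  have hA : s ^ 2 + b ^ 2 ≤ 4 * a * b := by nlinarith
  have hB : b ^ 2 - 2 * a * b + 4 * a ^ 2 ≤ s ^ 2 := by nlinarith
  have hbs2a : 2 * a < b + s := by linarith
  have d0 : 0 < (2 * a + b - s) * (2 * a - b + s) :=
    mul_pos (by linarith) (by linarith)
  have key := mul_nonneg (mul_pos ha hs0).le (sub_nonneg.2 hB)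
  have key2 := mul_nonneg (mul_pos ha hs0).le (mul_nonneg ha.le hb.le)
  refine ⟨?_, ?_, ?_⟩
  · rw [div_le_div_iff₀ (mul_pos (by linarith) (by linarith)) d0]
    linarith [key]
  · rw [div_le_div_iff₀ (mul_pos (by linarith) (by linarith)) d0]
    linarith [key, key2]
  · rw [div_le_div_iff₀ (mul_pos (by linarith) (by linarith)) d0]
    linarith [key, key2]
end
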